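/- arXiv:2308.03324 — 4 statements merged into one kernel-verified Lean document; each statement's English description precedes it below -/
import Mathlib

section
/- For n ≥ 1, let S_n be the set of permutations of {1,…,n} (grid states of an n×n grid). For a permutation σ, define M(σ) to be computed from the planar count J(x,x) where x = {(i, σ(i))}. Then adjacent transpositions connecting σ to σ' via an empty rectangle change M by exactly ±1; in particular, if there is an empty rectangle from state x to state y in an n×n grid (with no markings inside), then M(x) - M(y) = 1 whenever the rectangle contains no O-markings. -/
/-- `I(x, x)`: the number of pairs of points of the grid state `x` in which one
point is strictly southwest of the other. -/
noncomputable def Ixx {n : ℕ} (x : Equiv.Perm (Fin n)) : ℕ :=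
  Nat.card {ij : Fin n × Fin n // ij.1 < ij.2 ∧ x ij.1 < x ij.2}

/-- `I(x, O)`: pairs with a point of `x` strictly southwest of an `O`-marking
(markings sit at half-integer coordinates `(j + ½, O j + ½)`). -/
noncomputable def IxO {n : ℕ} (x O : Equiv.Perm (Fin n)) : ℕ :=
  Nat.card {ij : Fin n × Fin n // ij.1 ≤ ij.2 ∧ x ij.1 ≤ O ij.2}

/-- `I(O, x)`: pairs with an `O`-marking strictly southwest of a point of `x`. -/
noncomputable def IOx {n : ℕ} (x O : Equiv.Perm (Fin n)) : ℕ :=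
  Nat.card {ij : Fin n × Fin n // ij.1 < ij.2 ∧ O ij.1 < x ij.2}

/-- `I(O, O)`: pairs of `O`-markings, one strictly southwest of the other. -/
noncomputable def IOO {n : ℕ} (O : Equiv.Perm (Fin n)) : ℕ :=
  Nat.card {ij : Fin n × Fin n // ij.1 < ij.2 ∧ O ij.1 < O ij.2}

/-- The Maslov grading `M(x) = J(x - O, x - O) + 1
= I(x,x) - I(x,O) - I(O,x) + I(O,O) + 1` of a grid state. -/
noncomputable def Maslov {n : ℕ} (x O : Equiv.Perm (Fin n)) : ℤ :=
  (Ixx x : ℤ) - (IxO x O : ℤ) - (IOx x O : ℤ) + (IOO O : ℤ) + 1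

open Finset

section Aux

variable {n : ℕ}

private lemma card_subtype_int (P : Fin n × Fin n → Prop) [DecidablePred P] :
    (Nat.card {ij : Fin n × Fin n // P ij} : ℤ)
      = ∑ ij : Fin n × Fin n, if P ij then (1 : ℤ) else 0 := by
  rw [Nat.card_eq_fintype_card, Fintype.card_subtype, Finset.card_filter]
  push_cast
  rfl

private lemma sum_eq_pair {M : Type*} [AddCommMonoid M] {a b : Fin n} (hab : a ≠ b)
    (f : Fin n → M) (h : ∀ c, c ≠ a → c ≠ b → f c = 0) :
    ∑ c, f c = f a + f b := by
  rw [← Finset.sum_pair hab]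
  refine (Finset.sum_subset (Finset.subset_univ {a, b}) ?_).symm
  intro c _ hc
  simp only [Finset.mem_insert, Finset.mem_singleton, not_or] at hc
  exact h c hc.1 hc.2


private lemma chi_cancel {p q r u : Prop} [Decidable p] [Decidable q] [Decidable r] [Decidable u]
    (hqp : q → p) (hur : u → r) (hru : p → ¬q → r → u) :
    ((if p ∧ r then (1 : ℤ) else 0) - (if q ∧ r then (1 : ℤ) else 0))
      + ((if q ∧ u then (1 : ℤ) else 0) - (if p ∧ u then (1 : ℤ) else 0)) = 0 := by
  by_cases hq : q
  · have hp := hqp hq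
    simp [hp, hq]
  · by_cases hp : p
    · by_cases hr : r
      · have hu := hru hp hq hr
        simp [hp, hq, hr, hu]
      · have hu : ¬ u := fun hu => hr (hur hu)
        simp [hp, hq, hr, hu]
    · simp [hp, hq]

private lemma Ixx_diff (x : Equiv.Perm (Fin n)) (a b : Fin n)
    (hab : a < b) (hcd : x a < x b)
    (hempty : ∀ i : Fin n, a < i → i < b → ¬(x a < x i ∧ x i < x b)) :
    (Ixx x : ℤ) = (Ixx (x * Equiv.swap a b) : ℤ) + 1 := by
  set s := Equiv.swap a b with hs
  have hsa : s a = b := Equiv.swap_apply_left a b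
  have hsb : s b = a := Equiv.swap_apply_right a b
  have hsc : ∀ c : Fin n, c ≠ a → c ≠ b → s c = c := fun c h1 h2 =>
    Equiv.swap_apply_of_ne_of_ne h1 h2
  unfold Ixx
  rw [card_subtype_int, card_subtype_int]
  -- reindex the second sum
  have hre : (∑ ij : Fin n × Fin n,
        if ij.1 < ij.2 ∧ (x * s) ij.1 < (x * s) ij.2 then (1 : ℤ) else 0)
      = ∑ ij : Fin n × Fin n, if s ij.1 < s ij.2 ∧ x ij.1 < x ij.2 then (1 : ℤ) else 0 := by
    refine (Fintype.sum_equiv (Equiv.prodCongr s s)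
      (fun ij => if s ij.1 < s ij.2 ∧ x ij.1 < x ij.2 then (1 : ℤ) else 0) _ ?_).symm
    intro ij
    simp [Equiv.Perm.mul_apply, Equiv.swap_apply_self, s]
  rw [hre]
  have key : (∑ ij : Fin n × Fin n,
      ((if ij.1 < ij.2 ∧ x ij.1 < x ij.2 then (1 : ℤ) else 0)
        - (if s ij.1 < s ij.2 ∧ x ij.1 < x ij.2 then (1 : ℤ) else 0))) = 1 := by
    rw [Fintype.sum_prod_type]
    have hF0 : ∀ i : Fin n, i ≠ a → i ≠ b →
        (∑ j : Fin n, ((if i < j ∧ x i < x j then (1 : ℤ) else 0)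
          - (if s i < s j ∧ x i < x j then (1 : ℤ) else 0))) = 0 := by
      intro i hia hib
      rw [sum_eq_pair (hab.ne) _ ?_]
      · rw [hsc i hia hib, hsa, hsb]
        have h1 : i < a → i < b := fun h => h.trans hab
        have h2 : x i < x a → x i < x b := fun h => h.trans hcd
        have h3 : i < b → ¬ i < a → x i < x b → x i < x a := by
          intro h4 h5 h6
          have hai : a < i := lt_of_le_of_ne (le_of_not_gt h5) (Ne.symm hia)
          have := hempty i hai h4
          have hne : x i ≠ x a := fun hh => hia (x.injective hh)
          rcases lt_or_gt_of_ne hne with h | h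
          · exact h
          · exact absurd ⟨h, h6⟩ this
        have := chi_cancel (p := i < b) (q := i < a) (r := x i < x b) (u := x i < x a)
          h1 h2 h3
        linarith
      · intro c hca hcb
        rw [hsc i hia hib, hsc c hca hcb]
        ring
    rw [sum_eq_pair hab.ne _ hF0, ← Finset.sum_add_distrib]
    have hpt : ∀ j : Fin n,
        (((if a < j ∧ x a < x j then (1 : ℤ) else 0)
          - (if s a < s j ∧ x a < x j then (1 : ℤ) else 0))
        + ((if b < j ∧ x b < x j then (1 : ℤ) else 0)
          - (if s b < s j ∧ x b < x j then (1 : ℤ) else 0)))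
        = if j = b then 1 else 0 := by
      intro j
      rcases eq_or_ne j a with rfl | hja
      · rw [hsa, hsb]
        simp [lt_irrefl, hab, hab.not_gt, hcd.not_gt, (hab.ne).symm, hab.ne]
      rcases eq_or_ne j b with rfl | hjb
      · rw [hsa, hsb]
        simp [lt_irrefl, hab, hab.not_gt, hcd, hcd.not_gt]
      rw [hsa, hsb, hsc j hja hjb, if_neg hjb]
      have h1 : b < j → a < j := fun h => hab.trans h
      have h2 : x b < x j → x a < x j := fun h => hcd.trans h
      have h3 : a < j → ¬ b < j → x a < x j → x b < x j := by
        intro h4 h5 h6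
        have hjb' : j < b := lt_of_le_of_ne (le_of_not_gt h5) hjb
        have := hempty j h4 hjb'
        have hne : x j ≠ x b := fun hh => hjb (x.injective hh)
        rcases lt_or_gt_of_ne hne with h | h
        · exact absurd ⟨h6, h⟩ this
        · exact h
      have := chi_cancel (p := a < j) (q := b < j) (r := x a < x j) (u := x b < x j)
        h1 h2 h3
      linarith
    rw [Finset.sum_congr rfl (fun j _ => hpt j)]
    simp
  rw [Finset.sum_sub_distrib] at key
  linarith [key]

private lemma IxO_diff (x O : Equiv.Perm (Fin n)) (a b : Fin n)
    (hab : a < b) (hcd : x a < x b)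
    (hO : ∀ j : Fin n, a ≤ j → j < b → ¬(x a ≤ O j ∧ O j < x b)) :
    (IxO x O : ℤ) = (IxO (x * Equiv.swap a b) O : ℤ) := by
  set s := Equiv.swap a b with hs
  have hsa : s a = b := Equiv.swap_apply_left a b
  have hsb : s b = a := Equiv.swap_apply_right a b
  have hsc : ∀ c : Fin n, c ≠ a → c ≠ b → s c = c := fun c h1 h2 =>
    Equiv.swap_apply_of_ne_of_ne h1 h2
  unfold IxO
  rw [card_subtype_int, card_subtype_int]
  have hre : (∑ ij : Fin n × Fin n,
        if ij.1 ≤ ij.2 ∧ (x * s) ij.1 ≤ O ij.2 then (1 : ℤ) else 0)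
      = ∑ ij : Fin n × Fin n, if s ij.1 ≤ ij.2 ∧ x ij.1 ≤ O ij.2 then (1 : ℤ) else 0 := by
    refine (Fintype.sum_equiv (Equiv.prodCongr s (Equiv.refl (Fin n)))
      (fun ij => if s ij.1 ≤ ij.2 ∧ x ij.1 ≤ O ij.2 then (1 : ℤ) else 0) _ ?_).symm
    intro ij
    simp [Equiv.Perm.mul_apply, Equiv.swap_apply_self, s]
  rw [hre]
  have key : (∑ ij : Fin n × Fin n,
      ((if ij.1 ≤ ij.2 ∧ x ij.1 ≤ O ij.2 then (1 : ℤ) else 0)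
        - (if s ij.1 ≤ ij.2 ∧ x ij.1 ≤ O ij.2 then (1 : ℤ) else 0))) = 0 := by
    rw [Fintype.sum_prod_type]
    have hF0 : ∀ i : Fin n, i ≠ a → i ≠ b →
        (∑ j : Fin n, ((if i ≤ j ∧ x i ≤ O j then (1 : ℤ) else 0)
          - (if s i ≤ j ∧ x i ≤ O j then (1 : ℤ) else 0))) = 0 := by
      intro i hia hib
      rw [hsc i hia hib]
      simp
    rw [sum_eq_pair hab.ne _ hF0, ← Finset.sum_add_distrib]
    rw [Finset.sum_eq_zero]
    intro j _
    rw [hsa, hsb]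
    have h1 : b ≤ j → a ≤ j := fun h => hab.le.trans h
    have h2 : x b ≤ O j → x a ≤ O j := fun h => hcd.le.trans h
    have h3 : a ≤ j → ¬ b ≤ j → x a ≤ O j → x b ≤ O j := by
      intro h4 h5 h6
      exact le_of_not_gt (fun hlt => hO j h4 (lt_of_not_ge h5) ⟨h6, hlt⟩)
    have := chi_cancel (p := a ≤ j) (q := b ≤ j) (r := x a ≤ O j) (u := x b ≤ O j)
      h1 h2 h3
    linarith
  rw [Finset.sum_sub_distrib] at key
  linarith [key]

private lemma IOx_diff (x O : Equiv.Perm (Fin n)) (a b : Fin n)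
    (hab : a < b) (hcd : x a < x b)
    (hO : ∀ j : Fin n, a ≤ j → j < b → ¬(x a ≤ O j ∧ O j < x b)) :
    (IOx x O : ℤ) = (IOx (x * Equiv.swap a b) O : ℤ) := by
  set s := Equiv.swap a b with hs
  have hsa : s a = b := Equiv.swap_apply_left a b
  have hsb : s b = a := Equiv.swap_apply_right a b
  have hsc : ∀ c : Fin n, c ≠ a → c ≠ b → s c = c := fun c h1 h2 =>
    Equiv.swap_apply_of_ne_of_ne h1 h2
  unfold IOx
  rw [card_subtype_int, card_subtype_int]
  have hre : (∑ ij : Fin n × Fin n,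
        if ij.1 < ij.2 ∧ O ij.1 < (x * s) ij.2 then (1 : ℤ) else 0)
      = ∑ ij : Fin n × Fin n, if ij.1 < s ij.2 ∧ O ij.1 < x ij.2 then (1 : ℤ) else 0 := by
    refine (Fintype.sum_equiv (Equiv.prodCongr (Equiv.refl (Fin n)) s)
      (fun ij => if ij.1 < s ij.2 ∧ O ij.1 < x ij.2 then (1 : ℤ) else 0) _ ?_).symm
    intro ij
    simp [Equiv.Perm.mul_apply, Equiv.swap_apply_self, s]
  rw [hre]
  have key : (∑ ij : Fin n × Fin n,
      ((if ij.1 < ij.2 ∧ O ij.1 < x ij.2 then (1 : ℤ) else 0)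
        - (if ij.1 < s ij.2 ∧ O ij.1 < x ij.2 then (1 : ℤ) else 0))) = 0 := by
    rw [Fintype.sum_prod_type, Finset.sum_comm]
    have hF0 : ∀ j : Fin n, j ≠ a → j ≠ b →
        (∑ i : Fin n, ((if i < j ∧ O i < x j then (1 : ℤ) else 0)
          - (if i < s j ∧ O i < x j then (1 : ℤ) else 0))) = 0 := by
      intro j hja hjb
      rw [hsc j hja hjb]
      simp
    rw [sum_eq_pair hab.ne _ hF0, ← Finset.sum_add_distrib]
    rw [Finset.sum_eq_zero]
    intro i _
    rw [hsa, hsb]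
    have h1 : i < a → i < b := fun h => h.trans hab
    have h2 : O i < x a → O i < x b := fun h => h.trans hcd
    have h3 : i < b → ¬ i < a → O i < x b → O i < x a := by
      intro h4 h5 h6
      exact lt_of_not_ge (fun hle => hO i (le_of_not_gt h5) h4 ⟨hle, h6⟩)
    have := chi_cancel (p := i < b) (q := i < a) (r := O i < x b) (u := O i < x a)
      h1 h2 h3
    linarith
  rw [Finset.sum_sub_distrib] at key
  linarith [key]

end Aux

/-- Let `x` be a grid state of an `n×n` (planar) grid with
`O`-markings `O`, and let `y = x ∘ (a b)` be obtained from `x` by the empty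
rectangle with rows `a < b` and columns `x a < x b` that contains no point of `x`
in its interior and no `O`-marking.  Then `M(x) - M(y) = 1`: the grid
differential drops the Maslov grading by exactly one. -/
theorem maslov_drops_by_one_of_empty_rectangle
    {n : ℕ} (x O : Equiv.Perm (Fin n)) (a b : Fin n)
    (hab : a < b) (hcd : x a < x b)
    (hempty : ∀ i : Fin n, a < i → i < b → ¬(x a < x i ∧ x i < x b))
    (hO : ∀ j : Fin n, a ≤ j → j < b → ¬(x a ≤ O j ∧ O j < x b)) :
    Maslov x O - Maslov (x * Equiv.swap a b) O = 1 := by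
  have h1 := Ixx_diff x a b hab hcd hempty
  have h2 := IxO_diff x O a b hab hcd hO
  have h3 := IOx_diff x O a b hab hcd hO
  unfold Maslov
  linarith
end

section
/- Let g be an n×n grid (toroidal grid diagram) in which every row and every column contains at least one marking (an O*-marking or an X-marking). Then there is no positive composite domain p = r₁ * r₂ of two empty rectangles r₁ ∈ Rect°(x,y), r₂ ∈ Rect°(y,x) from a state x back to itself such that p is disjoint from all markings. -/
lemma sub_val_eq {n : ℕ} (t c : Fin n) :
    (t - c).val = if c.val ≤ t.val then t.val - c.val else n + t.val - c.val := by
  have ht := t.isLt; have hc := c.isLt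
  rw [Fin.sub_def]
  simp only
  split
  · have h1 : n - c.val + t.val = (t.val - c.val) + n := by omega
    rw [h1, Nat.add_mod_right, Nat.mod_eq_of_lt (by omega)]
  · rw [Nat.mod_eq_of_lt (by omega)]; omega

lemma cover {n : ℕ} (c d t : Fin n) (h : c ≠ d) :
    (t - c).val < (d - c).val ∨ (t - d).val < (c - d).val := by
  have ht := t.isLt; have hc := c.isLt; have hd := d.isLt
  have hne : c.val ≠ d.val := fun w => h (Fin.ext w)
  simp only [sub_val_eq]
  split <;> split <;> split <;> split <;> omega

lemma self_lt {n : ℕ} (c d : Fin n) (h : c ≠ d) : (c - c).val < (d - c).val := by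
  have hc := c.isLt; have hd := d.isLt
  have hne : c.val ≠ d.val := fun w => h (Fin.ext w)
  simp only [sub_val_eq]
  split <;> split <;> omega
def EmptyR {n : ℕ} (x : Equiv.Perm (Fin n)) (a b c d : Fin n) : Prop :=
  ∀ i : Fin n, ¬(0 < (i - a).val ∧ (i - a).val < (b - a).val ∧
    0 < (x i - c).val ∧ (x i - c).val < (d - c).val)

/-- The toroidal rectangle with rows `[a, b)` and columns `[c, d)` (cyclically)
contains none of the markings in `Mk` (markings are recorded by the square of the
grid that they occupy). -/
def FreeR {n : ℕ} (Mk : Finset (Fin n × Fin n)) (a b c d : Fin n) : Prop :=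
  ∀ s t : Fin n, (s, t) ∈ Mk →
    ¬((s - a).val < (b - a).val ∧ (t - c).val < (d - c).val)

/-- In an `n×n` toroidal grid in which every row and every column
contains at least one marking, there is no positive composite domain `r₁ * r₂` of
two empty rectangles `r₁ ∈ Rect°(x, y)`, `r₂ ∈ Rect°(y, x)` from a state `x` back
to itself with both rectangles disjoint from all markings.
(Here `y = x ∘ (a b)`; `r₁` is the rectangle with rows `[a,b)` and columns
`[x a, x b)`, and `r₂` is one of the two rectangles from `y` back to `x`:
rows `[a,b)`, columns `[x b, x a)`, or rows `[b,a)`, columns `[x a, x b)`.) -/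
theorem no_marking_free_composite_annulus
    {n : ℕ} (x : Equiv.Perm (Fin n)) (Mk : Finset (Fin n × Fin n))
    (hrow : ∀ s : Fin n, ∃ t : Fin n, (s, t) ∈ Mk)
    (hcol : ∀ t : Fin n, ∃ s : Fin n, (s, t) ∈ Mk)
    (a b : Fin n) (hab : a ≠ b) :
    ¬((EmptyR x a b (x a) (x b) ∧ FreeR Mk a b (x a) (x b)) ∧
      ((EmptyR x a b (x b) (x a) ∧ FreeR Mk a b (x b) (x a)) ∨
       (EmptyR x b a (x a) (x b) ∧ FreeR Mk b a (x a) (x b)))) := by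

  rintro ⟨⟨-, hF1⟩, hcase⟩
  have hxab : x a ≠ x b := fun h => hab (x.injective h)
  rcases hcase with ⟨-, hF2⟩ | ⟨-, hF2⟩
  · obtain ⟨t, ht⟩ := hrow a
    rcases cover (x a) (x b) t hxab with h | h
    · exact hF1 a t ht ⟨self_lt a b hab, h⟩
    · exact hF2 a t ht ⟨self_lt a b hab, h⟩
  · obtain ⟨s, hs⟩ := hcol (x a)
    rcases cover a b s hab with h | h
    · exact hF1 s (x a) hs ⟨h, self_lt (x a) (x b) hxab⟩
    · exact hF2 s (x a) hs ⟨h, self_lt (x a) (x b) hxab⟩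
end

section
/- Let g be an n×n toroidal grid diagram in which every row and every column contains a marking, and let C̃(g) be the F-vector space generated by grid states with differential ∂̃(x) = Σ_y #{r ∈ Rect°(x,y) : r contains no markings} · y (mod 2). Then ∂̃ ∘ ∂̃ = 0. -/
/-- The number of empty rectangles from the grid state `x` to the grid state `y`
on the `n×n` toroidal grid that avoid all the markings in `Mk`.  Such a rectangle
swaps the rows `a = ab.1`, `b = ab.2` (so `y = x ∘ (a b)`) and spans rows `[a, b)`
and columns `[x a, x b)` cyclically. -/
noncomputable def numRect {n : ℕ} (Mk : Finset (Fin n × Fin n))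
    (x y : Equiv.Perm (Fin n)) : ℕ :=
  Nat.card {ab : Fin n × Fin n // ab.1 ≠ ab.2 ∧
    (∀ i, y i = x (Equiv.swap ab.1 ab.2 i)) ∧
    EmptyR x ab.1 ab.2 (x ab.1) (x ab.2) ∧
    FreeR Mk ab.1 ab.2 (x ab.1) (x ab.2)}

/-!
A term of the coefficient of `z` in `∂̃ (∂̃ x)` is a pair of empty rectangles `x → y → z` avoiding
the markings. Its union has exactly one other decomposition into such a pair: two disjoint
rectangles can be taken in the other order, and the L-shaped union of two rectangles sharing a
corner row can be cut the other way. Two rectangles sharing both corner rows would form a thin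
annulus, which contains the marking of its row or of its column. So the terms are paired off by a
fixed-point-free involution, and their number is even.

Rows and columns are cyclic, so every rectangle is a product of two cyclic intervals, and all the
emptiness checks reduce to inclusions between such intervals.
-/

namespace Fin

variable {n : ℕ}

def cycIoo (a b : Fin n) : Set (Fin n) := {i | 0 < (i - a).val ∧ (i - a).val < (b - a).val}

def cycIco (a b : Fin n) : Set (Fin n) := {i | (i - a).val < (b - a).val}

lemma val_sub_cases (p q : Fin n) :
    q ≤ p ∧ (p - q).val + q.val = p.val ∨ p < q ∧ (p - q).val + q.val = n + p.val := by
  rcases le_or_gt q p with h | h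
  · exact Or.inl ⟨h, by rw [coe_sub_iff_le.2 h]; omega⟩
  · exact Or.inr ⟨h, by rw [coe_sub_iff_lt.2 h]; omega⟩

/- With these linear descriptions `omega` decides every statement about cyclic intervals below. -/
lemma mem_cycIco_iff {a b i : Fin n} :
    i ∈ cycIco a b ↔ a ≤ i ∧ i < b ∨ i < b ∧ b < a ∨ b < a ∧ a ≤ i := by
  have := val_sub_cases i a
  have := val_sub_cases b a
  change (i - a).val < (b - a).val ↔ _
  omega

lemma mem_cycIoo_iff {a b i : Fin n} :
    i ∈ cycIoo a b ↔ a < i ∧ i < b ∨ i < b ∧ b < a ∨ b < a ∧ a < i := by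
  have := val_sub_cases i a
  have := val_sub_cases b a
  change 0 < (i - a).val ∧ (i - a).val < (b - a).val ↔ _
  omega

variable {a b c i j : Fin n}

lemma left_notMem_cycIoo : a ∉ cycIoo a b := by
  simp only [mem_cycIoo_iff]; omega

lemma right_notMem_cycIoo : b ∉ cycIoo a b := by
  simp only [mem_cycIoo_iff]; omega

lemma left_mem_cycIco (h : a ≠ b) : a ∈ cycIco a b := by
  simp only [mem_cycIco_iff]; omega

lemma mem_cycIoo_of_mem_cycIco (h : i ∈ cycIco a b) (hi : i ≠ a) : i ∈ cycIoo a b := by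
  simp only [mem_cycIco_iff, mem_cycIoo_iff] at h ⊢; omega

lemma mem_cycIoo_rotate : c ∈ cycIoo a b ↔ a ∈ cycIoo b c := by
  simp only [mem_cycIoo_iff]; omega

lemma mem_cycIoo_swap_of_notMem (hab : a ≠ b) (hia : i ≠ a) (hib : i ≠ b) (h : i ∉ cycIoo a b) :
    i ∈ cycIoo b a := by
  simp only [mem_cycIoo_iff] at h ⊢; omega

lemma mem_cycIco_or_mem_cycIco (hab : a ≠ b) (i : Fin n) : i ∈ cycIco a b ∨ i ∈ cycIco b a := by
  simp only [mem_cycIco_iff]; omega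

lemma cycIoo_subset_left (h : c ∈ cycIoo a b) : cycIoo a c ⊆ cycIoo a b := by
  intro i hi; simp only [mem_cycIoo_iff] at h hi ⊢; omega

lemma cycIoo_subset_right (h : c ∈ cycIoo a b) : cycIoo c b ⊆ cycIoo a b := by
  intro i hi; simp only [mem_cycIoo_iff] at h hi ⊢; omega

lemma cycIco_subset_left (h : c ∈ cycIoo a b) : cycIco a c ⊆ cycIco a b := by
  intro i hi; simp only [mem_cycIoo_iff, mem_cycIco_iff] at h hi ⊢; omega

lemma cycIco_subset_right (h : c ∈ cycIoo a b) : cycIco c b ⊆ cycIco a b := by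
  intro i hi; simp only [mem_cycIoo_iff, mem_cycIco_iff] at h hi ⊢; omega

lemma cycIoo_subset_union (c : Fin n) : cycIoo a b ⊆ cycIoo a c ∪ {c} ∪ cycIoo c b := by
  intro i hi; simp only [mem_cycIoo_iff, Set.mem_union, Set.mem_singleton_iff] at hi ⊢; omega

lemma cycIco_subset_union (c : Fin n) : cycIco a b ⊆ cycIco a c ∪ cycIco c b := by
  intro i hi; simp only [mem_cycIco_iff, Set.mem_union] at hi ⊢; omega

lemma cycIoo_subset_cycIco : cycIoo a b ⊆ cycIco a b := fun _ hi => hi.2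

lemma notMem_cycIco_of_mem_cycIoo (h : i ∈ cycIoo b a) : i ∉ cycIco a b := by
  simp only [mem_cycIoo_iff, mem_cycIco_iff] at h ⊢; omega

lemma right_notMem_cycIoo_of_mem (h : c ∈ cycIoo a b) : b ∉ cycIoo a c := by
  simp only [mem_cycIoo_iff] at h ⊢; omega

lemma left_notMem_cycIoo_of_mem (h : c ∈ cycIoo a b) : a ∉ cycIoo c b := by
  simp only [mem_cycIoo_iff] at h ⊢; omega

lemma right_mem_cycIoo_of_mem_of_notMem (hi : i ∈ cycIoo a b) (hj : j ∉ cycIoo a b)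
    (hjb : j ≠ b) : b ∈ cycIoo i j := by
  simp only [mem_cycIoo_iff] at hi hj ⊢; omega

lemma left_mem_cycIoo_of_mem_of_notMem (hi : i ∈ cycIoo a b) (hj : j ∉ cycIoo a b)
    (hja : j ≠ a) : a ∈ cycIoo j i := by
  simp only [mem_cycIoo_iff] at hi hj ⊢; omega

end Fin

open Fin

section Rectangles

variable {n : ℕ} {Mk : Finset (Fin n × Fin n)} {x : Equiv.Perm (Fin n)}
  {a b c d a' b' c' d' i j r : Fin n}

lemma emptyR_iff : EmptyR x a b c d ↔ ∀ i ∈ cycIoo a b, x i ∉ cycIoo c d := by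
  simp only [EmptyR, cycIoo, Set.mem_ofPred_eq, not_and, and_imp]

lemma EmptyR.mono (h : EmptyR x a b c d) (hr : cycIoo a' b' ⊆ cycIoo a b)
    (hc : cycIoo c' d' ⊆ cycIoo c d) : EmptyR x a' b' c' d' := by
  rw [emptyR_iff] at h ⊢
  exact fun i hi hxi => h i (hr hi) (hc hxi)

lemma FreeR.mono (h : FreeR Mk a b c d) (hr : cycIco a' b' ⊆ cycIco a b)
    (hc : cycIco c' d' ⊆ cycIco c d) : FreeR Mk a' b' c' d' :=
  fun s t hst hin => h s t hst ⟨hr hin.1, hc hin.2⟩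

lemma emptyR_of_split_rows (h₁ : EmptyR x a r c d) (h₂ : EmptyR x r b c d)
    (hxr : x r ∉ cycIoo c d) : EmptyR x a b c d := by
  rw [emptyR_iff] at h₁ h₂ ⊢
  intro i hi
  rcases cycIoo_subset_union r hi with (hi | rfl) | hi
  exacts [h₁ i hi, hxr, h₂ i hi]

lemma emptyR_of_split_cols (h₁ : EmptyR x a b c (x r))
    (h₂ : EmptyR x a b (x r) d) (hr' : r ∉ cycIoo a b) : EmptyR x a b c d := by
  rw [emptyR_iff] at h₁ h₂ ⊢
  intro i hi hxi
  rcases cycIoo_subset_union (x r) hxi with (hxi | hxi) | hxi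
  · exact h₁ i hi hxi
  · exact hr' (x.injective hxi ▸ hi)
  · exact h₂ i hi hxi

lemma freeR_of_split_rows (h₁ : FreeR Mk a r c d) (h₂ : FreeR Mk r b c d) :
    FreeR Mk a b c d := fun s t hst hin =>
  (cycIco_subset_union r hin.1).elim (fun hs => h₁ s t hst ⟨hs, hin.2⟩)
    (fun hs => h₂ s t hst ⟨hs, hin.2⟩)

lemma freeR_of_split_cols (h₁ : FreeR Mk a b c r) (h₂ : FreeR Mk a b r d) :
    FreeR Mk a b c d := fun s t hst hin =>
  (cycIco_subset_union r hin.2).elim (fun ht => h₁ s t hst ⟨hin.1, ht⟩)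
    (fun ht => h₂ s t hst ⟨hin.1, ht⟩)

lemma EmptyR.mul_swap (h : EmptyR x a b c d) (hi : i ∈ cycIoo a b → x j ∉ cycIoo c d)
    (hj : j ∈ cycIoo a b → x i ∉ cycIoo c d) : EmptyR (x * Equiv.swap i j) a b c d := by
  rw [emptyR_iff] at h ⊢
  intro k hk
  rw [Equiv.Perm.mul_apply, Equiv.swap_apply_def]
  split_ifs with hki hkj
  · exact hi (hki ▸ hk)
  · exact hj (hkj ▸ hk)
  · exact h k hk

lemma EmptyR.mul_swap_of_notMem (h : EmptyR x a b c d) (hi : i ∉ cycIoo a b)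
    (hj : j ∉ cycIoo a b) : EmptyR (x * Equiv.swap i j) a b c d :=
  h.mul_swap (absurd · hi) (absurd · hj)

lemma EmptyR.of_mul_swap (h : EmptyR (x * Equiv.swap i j) a b c d) (hi : i ∉ cycIoo a b)
    (hj : j ∉ cycIoo a b) : EmptyR x a b c d := by
  simpa using h.mul_swap_of_notMem hi hj

end Rectangles

section Decompositions

variable {n : ℕ} {Mk : Finset (Fin n × Fin n)} {x : Equiv.Perm (Fin n)} {a b c d : Fin n}

def IsRect (Mk : Finset (Fin n × Fin n)) (x : Equiv.Perm (Fin n)) (r : Fin n × Fin n) : Prop :=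
  r.1 ≠ r.2 ∧ EmptyR x r.1 r.2 (x r.1) (x r.2) ∧ FreeR Mk r.1 r.2 (x r.1) (x r.2)

def IsRectPair (Mk : Finset (Fin n × Fin n)) (x : Equiv.Perm (Fin n))
    (t : (Fin n × Fin n) × (Fin n × Fin n)) : Prop :=
  IsRect Mk x t.1 ∧ IsRect Mk (x * Equiv.swap t.1.1 t.1.2) t.2

def endState {α : Type*} [DecidableEq α] (x : Equiv.Perm α) (t : (α × α) × (α × α)) :
    Equiv.Perm α :=
  x * Equiv.swap t.1.1 t.1.2 * Equiv.swap t.2.1 t.2.2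

lemma endState_eq_swap {α : Type*} [DecidableEq α] (x : Equiv.Perm α) (a b c d : α) :
    endState x ((a, b), (c, d)) = endState x ((Equiv.swap a b c, Equiv.swap a b d), (a, b)) := by
  rw [endState, endState, mul_assoc, Equiv.mul_swap_eq_swap_mul, ← mul_assoc]

open Classical in
/-- The other decomposition into two rectangles of the union of the rectangles of `t`: the other
order for disjoint rectangles, the other cut of the L-shaped union for rectangles sharing one corner
row, and `t` itself for an annulus. -/
noncomputable def altDecomp (x : Equiv.Perm (Fin n)) :
    (Fin n × Fin n) × (Fin n × Fin n) → (Fin n × Fin n) × (Fin n × Fin n)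
  | ((a, b), (c, d)) =>
    if c = a then
      if d = b then ((a, b), (c, d))
      else if a ∈ cycIco b d then ((a, d), (d, b)) else ((b, d), (a, b))
    else if c = b then
      if d = a then ((a, b), (c, d))
      else if x a ∈ cycIco (x b) (x d) then ((a, d), (a, b)) else ((b, d), (a, d))
    else if d = a then
      if x a ∈ cycIco (x c) (x b) then ((c, a), (c, b)) else ((c, b), (a, b))
    else if d = b then
      if a ∈ cycIco c b then ((c, a), (a, b)) else ((c, b), (a, c))
    else ((c, d), (a, b))

/- Each of the next eight lemmas recuts the L-shaped union of two rectangles sharing one corner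
row. The second conjunct is the branch condition under which `altDecomp` cuts the new pair back. -/
lemma isRectPair_ad_db_of_ab_ad (hdb : d ≠ b) (hcut : a ∈ cycIco b d)
    (h : IsRectPair Mk x ((a, b), (a, d))) :
    IsRectPair Mk x ((a, d), (d, b)) ∧ x a ∈ cycIco (x d) (x b) := by
  dsimp only [IsRectPair, IsRect] at h
  obtain ⟨⟨hab, he₁, hf₁⟩, had, he₂, hf₂⟩ := h
  simp only [Equiv.Perm.mul_apply, Equiv.swap_apply_left,
    Equiv.swap_apply_of_ne_of_ne had.symm hdb] at he₂ hf₂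
  simp only [IsRectPair, IsRect, Equiv.Perm.mul_apply, Equiv.swap_apply_right,
    Equiv.swap_apply_of_ne_of_ne hab.symm hdb.symm]
  have hd : d ∈ cycIoo a b := mem_cycIoo_rotate.2 (mem_cycIoo_of_mem_cycIco hcut hab)
  have hxb : x b ∈ cycIoo (x a) (x d) := mem_cycIoo_rotate.1 <|
    mem_cycIoo_swap_of_notMem (x.injective.ne hab) (x.injective.ne had.symm) (x.injective.ne hdb)
      (emptyR_iff.1 he₁ d hd)
  refine ⟨⟨⟨had, ?_, ?_⟩, hdb, ?_, ?_⟩, cycIoo_subset_cycIco (mem_cycIoo_rotate.1 hxb)⟩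
  · exact emptyR_of_split_cols (he₁.mono (cycIoo_subset_left hd) subset_rfl)
      (he₂.of_mul_swap left_notMem_cycIoo (right_notMem_cycIoo_of_mem hd))
      (right_notMem_cycIoo_of_mem hd)
  · exact freeR_of_split_cols (hf₁.mono (cycIco_subset_left hd) subset_rfl) hf₂
  · exact (he₁.mono (cycIoo_subset_right hd) subset_rfl).mul_swap_of_notMem
      (left_notMem_cycIoo_of_mem hd) left_notMem_cycIoo
  · exact hf₁.mono (cycIco_subset_right hd) subset_rfl

lemma isRectPair_bd_ab_of_ab_ad (hdb : d ≠ b) (hcut : a ∉ cycIco b d)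
    (h : IsRectPair Mk x ((a, b), (a, d))) :
    IsRectPair Mk x ((b, d), (a, b)) ∧ x b ∈ cycIco (x a) (x d) := by
  dsimp only [IsRectPair, IsRect] at h
  obtain ⟨⟨hab, he₁, hf₁⟩, had, he₂, hf₂⟩ := h
  simp only [Equiv.Perm.mul_apply, Equiv.swap_apply_left,
    Equiv.swap_apply_of_ne_of_ne had.symm hdb] at he₂ hf₂
  simp only [IsRectPair, IsRect, Equiv.Perm.mul_apply, Equiv.swap_apply_left,
    Equiv.swap_apply_of_ne_of_ne hab had]
  have hb : b ∈ cycIoo a d := mem_cycIoo_rotate.1 <| mem_cycIoo_rotate.1 <|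
    mem_cycIoo_swap_of_notMem hdb.symm hab had (hcut <| cycIoo_subset_cycIco ·)
  have hxa : x a ∉ cycIoo (x b) (x d) := by simpa using emptyR_iff.1 he₂ b hb
  have hxb : x b ∈ cycIoo (x a) (x d) := mem_cycIoo_rotate.1 <| mem_cycIoo_rotate.1 <|
    mem_cycIoo_swap_of_notMem (x.injective.ne hdb.symm) (x.injective.ne hab) (x.injective.ne had)
      hxa
  refine ⟨⟨⟨hdb.symm, ?_, ?_⟩, hab, ?_, ?_⟩, cycIoo_subset_cycIco hxb⟩
  · exact (he₂.mono (cycIoo_subset_right hb) subset_rfl).of_mul_swap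
      (left_notMem_cycIoo_of_mem hb) left_notMem_cycIoo
  · exact hf₂.mono (cycIco_subset_right hb) subset_rfl
  · refine EmptyR.mul_swap_of_notMem ?_ right_notMem_cycIoo (right_notMem_cycIoo_of_mem hb)
    exact emptyR_of_split_cols he₁ ((he₂.mono (cycIoo_subset_left hb) subset_rfl).of_mul_swap
      left_notMem_cycIoo right_notMem_cycIoo) right_notMem_cycIoo
  · exact freeR_of_split_cols hf₁ (hf₂.mono (cycIco_subset_left hb) subset_rfl)

lemma isRectPair_ad_ab_of_ab_bd (hda : d ≠ a) (hcut : x a ∈ cycIco (x b) (x d))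
    (h : IsRectPair Mk x ((a, b), (b, d))) :
    IsRectPair Mk x ((a, d), (a, b)) ∧ a ∈ cycIco d b := by
  dsimp only [IsRectPair, IsRect] at h
  obtain ⟨⟨hab, he₁, hf₁⟩, hbd, he₂, hf₂⟩ := h
  simp only [Equiv.Perm.mul_apply, Equiv.swap_apply_right,
    Equiv.swap_apply_of_ne_of_ne hda hbd.symm] at he₂ hf₂
  simp only [IsRectPair, IsRect, Equiv.Perm.mul_apply, Equiv.swap_apply_left,
    Equiv.swap_apply_of_ne_of_ne hab.symm hbd]
  have hxd : x d ∈ cycIoo (x a) (x b) := mem_cycIoo_rotate.1 <| mem_cycIoo_rotate.1 <|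
    mem_cycIoo_of_mem_cycIco hcut (x.injective.ne hab)
  have hd : d ∉ cycIoo a b := fun hd => emptyR_iff.1 he₁ d hd hxd
  have hb : b ∈ cycIoo a d := mem_cycIoo_rotate.1 (mem_cycIoo_swap_of_notMem hab hda hbd.symm hd)
  refine ⟨⟨⟨hda.symm, ?_, ?_⟩, hab, ?_, ?_⟩, cycIoo_subset_cycIco (mem_cycIoo_rotate.1 hb)⟩
  · exact emptyR_of_split_rows (he₁.mono subset_rfl (cycIoo_subset_left hxd))
      (he₂.of_mul_swap (left_notMem_cycIoo_of_mem hb) left_notMem_cycIoo)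
      (right_notMem_cycIoo_of_mem hxd)
  · exact freeR_of_split_rows (hf₁.mono subset_rfl (cycIco_subset_left hxd)) hf₂
  · exact (he₁.mono subset_rfl (cycIoo_subset_right hxd)).mul_swap_of_notMem
      left_notMem_cycIoo hd
  · exact hf₁.mono subset_rfl (cycIco_subset_right hxd)

lemma isRectPair_bd_ad_of_ab_bd (hda : d ≠ a) (hcut : x a ∉ cycIco (x b) (x d))
    (h : IsRectPair Mk x ((a, b), (b, d))) :
    IsRectPair Mk x ((b, d), (a, d)) ∧ b ∈ cycIco a d := by
  dsimp only [IsRectPair, IsRect] at h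
  obtain ⟨⟨hab, he₁, hf₁⟩, hbd, he₂, hf₂⟩ := h
  simp only [Equiv.Perm.mul_apply, Equiv.swap_apply_right,
    Equiv.swap_apply_of_ne_of_ne hda hbd.symm] at he₂ hf₂
  simp only [IsRectPair, IsRect, Equiv.Perm.mul_apply, Equiv.swap_apply_right,
    Equiv.swap_apply_of_ne_of_ne hab hda.symm]
  have hxb : x b ∈ cycIoo (x a) (x d) := mem_cycIoo_rotate.1 <| mem_cycIoo_rotate.1 <|
    mem_cycIoo_swap_of_notMem (x.injective.ne hbd) (x.injective.ne hab) (x.injective.ne hda.symm)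
      (hcut <| cycIoo_subset_cycIco ·)
  have ha : a ∉ cycIoo b d := fun ha => emptyR_iff.1 he₂ a ha (by simpa using hxb)
  have hb : b ∈ cycIoo a d := mem_cycIoo_rotate.1 <| mem_cycIoo_rotate.1 <|
    mem_cycIoo_swap_of_notMem hbd hab hda.symm ha
  have he₂' : EmptyR x b d (x a) (x d) := he₂.of_mul_swap ha left_notMem_cycIoo
  refine ⟨⟨⟨hbd, ?_, ?_⟩, hda.symm, ?_, ?_⟩, cycIoo_subset_cycIco hb⟩
  · exact he₂'.mono subset_rfl (cycIoo_subset_right hxb)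
  · exact hf₂.mono subset_rfl (cycIco_subset_right hxb)
  · refine (emptyR_of_split_rows he₁ (he₂'.mono subset_rfl (cycIoo_subset_left hxb))
      right_notMem_cycIoo).mul_swap (fun _ => right_notMem_cycIoo_of_mem hxb) ?_
    exact (absurd · right_notMem_cycIoo)
  · exact freeR_of_split_rows hf₁ (hf₂.mono subset_rfl (cycIco_subset_left hxb))

lemma isRectPair_ca_cb_of_ab_ca (hcb : c ≠ b) (hcut : x a ∈ cycIco (x c) (x b))
    (h : IsRectPair Mk x ((a, b), (c, a))) :
    IsRectPair Mk x ((c, a), (c, b)) ∧ c ∉ cycIco a b := by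
  dsimp only [IsRectPair, IsRect] at h
  obtain ⟨⟨hab, he₁, hf₁⟩, hca, he₂, hf₂⟩ := h
  simp only [Equiv.Perm.mul_apply, Equiv.swap_apply_left,
    Equiv.swap_apply_of_ne_of_ne hca hcb] at he₂ hf₂
  simp only [IsRectPair, IsRect, Equiv.Perm.mul_apply, Equiv.swap_apply_left,
    Equiv.swap_apply_of_ne_of_ne hcb.symm hab.symm]
  have hxa : x a ∈ cycIoo (x c) (x b) :=
    mem_cycIoo_of_mem_cycIco hcut (x.injective.ne hca.symm)
  have hb : b ∉ cycIoo c a := fun hb => emptyR_iff.1 he₂ b hb (by simpa using hxa)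
  have ha : a ∈ cycIoo c b :=
    mem_cycIoo_rotate.1 (mem_cycIoo_swap_of_notMem hca hcb.symm hab.symm hb)
  have he₂' : EmptyR x c a (x c) (x b) := he₂.of_mul_swap right_notMem_cycIoo hb
  refine ⟨⟨⟨hca, ?_, ?_⟩, hcb, ?_, ?_⟩,
    notMem_cycIco_of_mem_cycIoo (mem_cycIoo_rotate.1 ha)⟩
  · exact he₂'.mono subset_rfl (cycIoo_subset_left hxa)
  · exact hf₂.mono subset_rfl (cycIco_subset_left hxa)
  · refine (emptyR_of_split_rows (he₂'.mono subset_rfl (cycIoo_subset_right hxa)) he₁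
      left_notMem_cycIoo).mul_swap (absurd · left_notMem_cycIoo) ?_
    exact fun _ => left_notMem_cycIoo_of_mem hxa
  · exact freeR_of_split_rows (hf₂.mono subset_rfl (cycIco_subset_right hxa)) hf₁

lemma isRectPair_cb_ab_of_ab_ca (hcb : c ≠ b) (hcut : x a ∉ cycIco (x c) (x b))
    (h : IsRectPair Mk x ((a, b), (c, a))) :
    IsRectPair Mk x ((c, b), (a, b)) ∧ c ∉ cycIco a b := by
  dsimp only [IsRectPair, IsRect] at h
  obtain ⟨⟨hab, he₁, hf₁⟩, hca, he₂, hf₂⟩ := h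
  simp only [Equiv.Perm.mul_apply, Equiv.swap_apply_left,
    Equiv.swap_apply_of_ne_of_ne hca hcb] at he₂ hf₂
  simp only [IsRectPair, IsRect, Equiv.Perm.mul_apply, Equiv.swap_apply_right,
    Equiv.swap_apply_of_ne_of_ne hca.symm hab]
  have hxc : x c ∈ cycIoo (x a) (x b) := mem_cycIoo_rotate.1 <| mem_cycIoo_rotate.1 <|
    mem_cycIoo_swap_of_notMem (x.injective.ne hcb) (x.injective.ne hca.symm) (x.injective.ne hab)
      (hcut <| cycIoo_subset_cycIco ·)
  have hc : c ∈ cycIoo b a := mem_cycIoo_swap_of_notMem hab hca hcb (emptyR_iff.1 he₁ c · hxc)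
  have ha : a ∈ cycIoo c b := mem_cycIoo_rotate.1 (mem_cycIoo_rotate.1 hc)
  refine ⟨⟨⟨hcb, ?_, ?_⟩, hab, ?_, ?_⟩, notMem_cycIco_of_mem_cycIoo hc⟩
  · exact emptyR_of_split_rows (he₂.of_mul_swap right_notMem_cycIoo (right_notMem_cycIoo_of_mem ha))
      (he₁.mono subset_rfl (cycIoo_subset_right hxc)) (left_notMem_cycIoo_of_mem hxc)
  · exact freeR_of_split_rows hf₂ (hf₁.mono subset_rfl (cycIco_subset_right hxc))
  · exact (he₁.mono subset_rfl (cycIoo_subset_left hxc)).mul_swap_of_notMem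
      (notMem_cycIco_of_mem_cycIoo hc <| cycIoo_subset_cycIco ·) right_notMem_cycIoo
  · exact hf₁.mono subset_rfl (cycIco_subset_left hxc)

lemma isRectPair_ca_ab_of_ab_cb (hca : c ≠ a) (hcut : a ∈ cycIco c b)
    (h : IsRectPair Mk x ((a, b), (c, b))) :
    IsRectPair Mk x ((c, a), (a, b)) ∧ x c ∉ cycIco (x a) (x b) := by
  dsimp only [IsRectPair, IsRect] at h
  obtain ⟨⟨hab, he₁, hf₁⟩, hcb, he₂, hf₂⟩ := h
  simp only [Equiv.Perm.mul_apply, Equiv.swap_apply_right,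
    Equiv.swap_apply_of_ne_of_ne hca hcb] at he₂ hf₂
  simp only [IsRectPair, IsRect, Equiv.Perm.mul_apply, Equiv.swap_apply_right,
    Equiv.swap_apply_of_ne_of_ne hcb.symm hab.symm]
  have ha : a ∈ cycIoo c b := mem_cycIoo_of_mem_cycIco hcut hca.symm
  have hxb : x b ∉ cycIoo (x c) (x a) := by simpa using emptyR_iff.1 he₂ a ha
  have hxc : x c ∈ cycIoo (x b) (x a) := mem_cycIoo_rotate.1 <| mem_cycIoo_rotate.1 <|
    mem_cycIoo_swap_of_notMem (x.injective.ne hca) (x.injective.ne hcb.symm)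
      (x.injective.ne hab.symm) hxb
  refine ⟨⟨⟨hca, ?_, ?_⟩, hab, ?_, ?_⟩, notMem_cycIco_of_mem_cycIoo hxc⟩
  · exact (he₂.mono (cycIoo_subset_left ha) subset_rfl).of_mul_swap right_notMem_cycIoo
      (right_notMem_cycIoo_of_mem ha)
  · exact hf₂.mono (cycIco_subset_left ha) subset_rfl
  · exact (emptyR_of_split_cols ((he₂.mono (cycIoo_subset_right ha) subset_rfl).of_mul_swap
      left_notMem_cycIoo right_notMem_cycIoo) he₁ left_notMem_cycIoo).mul_swap_of_notMem
      (left_notMem_cycIoo_of_mem ha) left_notMem_cycIoo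
  · exact freeR_of_split_cols (hf₂.mono (cycIco_subset_right ha) subset_rfl) hf₁

lemma isRectPair_cb_ac_of_ab_cb (hca : c ≠ a) (hcut : a ∉ cycIco c b)
    (h : IsRectPair Mk x ((a, b), (c, b))) :
    IsRectPair Mk x ((c, b), (a, c)) ∧ x c ∉ cycIco (x a) (x b) := by
  dsimp only [IsRectPair, IsRect] at h
  obtain ⟨⟨hab, he₁, hf₁⟩, hcb, he₂, hf₂⟩ := h
  simp only [Equiv.Perm.mul_apply, Equiv.swap_apply_right,
    Equiv.swap_apply_of_ne_of_ne hca hcb] at he₂ hf₂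
  simp only [IsRectPair, IsRect, Equiv.Perm.mul_apply, Equiv.swap_apply_left,
    Equiv.swap_apply_of_ne_of_ne hca.symm hab]
  have ha : a ∉ cycIoo c b := (hcut <| cycIoo_subset_cycIco ·)
  have hc : c ∈ cycIoo a b := mem_cycIoo_rotate.1 <| mem_cycIoo_rotate.1 <|
    mem_cycIoo_swap_of_notMem hcb hca.symm hab ha
  have hxc : x c ∈ cycIoo (x b) (x a) := mem_cycIoo_swap_of_notMem (x.injective.ne hab)
    (x.injective.ne hca) (x.injective.ne hcb) (emptyR_iff.1 he₁ c hc)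
  refine ⟨⟨⟨hcb, ?_, ?_⟩, hca.symm, ?_, ?_⟩, notMem_cycIco_of_mem_cycIoo hxc⟩
  · exact emptyR_of_split_cols (he₂.of_mul_swap ha right_notMem_cycIoo)
      (he₁.mono (cycIoo_subset_right hc) subset_rfl) ha
  · exact freeR_of_split_cols hf₂ (hf₁.mono (cycIco_subset_right hc) subset_rfl)
  · exact (he₁.mono (cycIoo_subset_left hc) subset_rfl).mul_swap_of_notMem
      right_notMem_cycIoo (right_notMem_cycIoo_of_mem hc)
  · exact hf₁.mono (cycIco_subset_left hc) subset_rfl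

lemma isRectPair_cd_ab_of_ab_cd (hca : c ≠ a) (hcb : c ≠ b) (hda : d ≠ a) (hdb : d ≠ b)
    (h : IsRectPair Mk x ((a, b), (c, d))) : IsRectPair Mk x ((c, d), (a, b)) := by
  dsimp only [IsRectPair, IsRect] at h
  obtain ⟨⟨hab, he₁, hf₁⟩, hcd, he₂, hf₂⟩ := h
  simp only [Equiv.Perm.mul_apply, Equiv.swap_apply_of_ne_of_ne hca hcb,
    Equiv.swap_apply_of_ne_of_ne hda hdb] at he₂ hf₂
  simp only [IsRectPair, IsRect, Equiv.Perm.mul_apply,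
    Equiv.swap_apply_of_ne_of_ne hca.symm hda.symm, Equiv.swap_apply_of_ne_of_ne hcb.symm hdb.symm]
  have hya : a ∈ cycIoo c d → x b ∉ cycIoo (x c) (x d) := by simpa using emptyR_iff.1 he₂ a
  have hyb : b ∈ cycIoo c d → x a ∉ cycIoo (x c) (x d) := by simpa using emptyR_iff.1 he₂ b
  -- a corner of `x` inside one rectangle would force a corner of the other inside it
  have hxa : a ∈ cycIoo c d → x a ∉ cycIoo (x c) (x d) := fun ha hxa =>
    emptyR_iff.1 he₁ d (right_mem_cycIoo_of_mem_of_notMem ha (hyb · hxa) hdb.symm)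
      (right_mem_cycIoo_of_mem_of_notMem hxa (hya ha) (x.injective.ne hdb.symm))
  have hxb : b ∈ cycIoo c d → x b ∉ cycIoo (x c) (x d) := fun hb hxb =>
    emptyR_iff.1 he₁ c (left_mem_cycIoo_of_mem_of_notMem hb (hya · hxb) hca.symm)
      (left_mem_cycIoo_of_mem_of_notMem hxb (hyb hb) (x.injective.ne hca.symm))
  have hxc : c ∈ cycIoo a b → x d ∉ cycIoo (x a) (x b) := fun hc hxd =>
    hyb (right_mem_cycIoo_of_mem_of_notMem hc (emptyR_iff.1 he₁ d · hxd) hdb)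
      (left_mem_cycIoo_of_mem_of_notMem hxd (emptyR_iff.1 he₁ c hc) (x.injective.ne hca))
  have hxd : d ∈ cycIoo a b → x c ∉ cycIoo (x a) (x b) := fun hd hxc =>
    hya (left_mem_cycIoo_of_mem_of_notMem hd (emptyR_iff.1 he₁ c · hxc) hca)
      (right_mem_cycIoo_of_mem_of_notMem hxc (emptyR_iff.1 he₁ d hd) (x.injective.ne hdb))
  refine ⟨⟨hcd, ?_, hf₂⟩, hab, he₁.mul_swap hxc hxd, hf₁⟩
  simpa using he₂.mul_swap (i := a) (j := b) (by simpa using hxa) (by simpa using hxb)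

lemma not_isRectPair_ab_ab (hrow : ∀ s : Fin n, ∃ t : Fin n, (s, t) ∈ Mk) :
    ¬IsRectPair Mk x ((a, b), (a, b)) := by
  dsimp only [IsRectPair, IsRect]
  rintro ⟨⟨hab, -, hf₁⟩, -, -, hf₂⟩
  simp only [Equiv.Perm.mul_apply, Equiv.swap_apply_left, Equiv.swap_apply_right] at hf₂
  obtain ⟨t, ht⟩ := hrow a
  rcases mem_cycIco_or_mem_cycIco (x.injective.ne hab) t with h | h
  exacts [hf₁ a t ht ⟨left_mem_cycIco hab, h⟩, hf₂ a t ht ⟨left_mem_cycIco hab, h⟩]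

lemma not_isRectPair_ab_ba (hcol : ∀ t : Fin n, ∃ s : Fin n, (s, t) ∈ Mk) :
    ¬IsRectPair Mk x ((a, b), (b, a)) := by
  dsimp only [IsRectPair, IsRect]
  rintro ⟨⟨hab, -, hf₁⟩, -, -, hf₂⟩
  simp only [Equiv.Perm.mul_apply, Equiv.swap_apply_left, Equiv.swap_apply_right] at hf₂
  obtain ⟨s, hs⟩ := hcol (x a)
  have hxa := left_mem_cycIco (x.injective.ne hab)
  rcases mem_cycIco_or_mem_cycIco hab s with h | h
  exacts [hf₁ s (x a) hs ⟨h, hxa⟩, hf₂ s (x a) hs ⟨h, hxa⟩]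

end Decompositions

section Involution

variable {n : ℕ} {Mk : Finset (Fin n × Fin n)} {x : Equiv.Perm (Fin n)}

def IsAltDecomp (Mk : Finset (Fin n × Fin n)) (x : Equiv.Perm (Fin n))
    (t t' : (Fin n × Fin n) × (Fin n × Fin n)) : Prop :=
  IsRectPair Mk x t' ∧ endState x t' = endState x t ∧ altDecomp x t = t' ∧ altDecomp x t' = t ∧
    t' ≠ t

variable {a b c d : Fin n}

lemma exists_isAltDecomp_ab_ad (hab : a ≠ b) (had : a ≠ d) (hbd : b ≠ d)
    (h : IsRectPair Mk x ((a, b), (a, d))) : ∃ t', IsAltDecomp Mk x ((a, b), (a, d)) t' := by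
  have := hab.symm; have := had.symm; have := hbd.symm
  by_cases hcut : a ∈ cycIco b d
  · obtain ⟨h', hcut'⟩ := isRectPair_ad_db_of_ab_ad hbd.symm hcut h
    exact ⟨_, h', by rw [endState_eq_swap x a d]; simp [Equiv.swap_apply_of_ne_of_ne, *],
      by simp [altDecomp, *], by simp [altDecomp, *], by simp [*]⟩
  · obtain ⟨h', hcut'⟩ := isRectPair_bd_ab_of_ab_ad hbd.symm hcut h
    exact ⟨_, h', by rw [endState_eq_swap x a b]; simp [Equiv.swap_apply_of_ne_of_ne, *],
      by simp [altDecomp, *], by simp [altDecomp, *], by simp [*]⟩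

lemma exists_isAltDecomp_ab_bd (hab : a ≠ b) (had : a ≠ d) (hbd : b ≠ d)
    (h : IsRectPair Mk x ((a, b), (b, d))) : ∃ t', IsAltDecomp Mk x ((a, b), (b, d)) t' := by
  have := hab.symm; have := had.symm; have := hbd.symm
  by_cases hcut : x a ∈ cycIco (x b) (x d)
  · obtain ⟨h', hcut'⟩ := isRectPair_ad_ab_of_ab_bd had.symm hcut h
    exact ⟨_, h', by rw [endState_eq_swap x a b]; simp [Equiv.swap_apply_of_ne_of_ne, *],
      by simp [altDecomp, *], by simp [altDecomp, *], by simp [*]⟩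
  · obtain ⟨h', hcut'⟩ := isRectPair_bd_ad_of_ab_bd had.symm hcut h
    exact ⟨_, h', by rw [endState_eq_swap x b d]; simp [Equiv.swap_apply_of_ne_of_ne, *],
      by simp [altDecomp, *], by simp [altDecomp, *], by simp [*]⟩

lemma exists_isAltDecomp_ab_ca (hab : a ≠ b) (hca : c ≠ a) (hcb : c ≠ b)
    (h : IsRectPair Mk x ((a, b), (c, a))) : ∃ t', IsAltDecomp Mk x ((a, b), (c, a)) t' := by
  have := hab.symm; have := hca.symm; have := hcb.symm
  by_cases hcut : x a ∈ cycIco (x c) (x b)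
  · obtain ⟨h', hcut'⟩ := isRectPair_ca_cb_of_ab_ca hcb hcut h
    exact ⟨_, h', by rw [endState_eq_swap x c a]; simp [Equiv.swap_apply_of_ne_of_ne, *],
      by simp [altDecomp, *], by simp [altDecomp, *], by simp [*]⟩
  · obtain ⟨h', hcut'⟩ := isRectPair_cb_ab_of_ab_ca hcb hcut h
    exact ⟨_, h', by rw [endState_eq_swap x a b]; simp [Equiv.swap_apply_of_ne_of_ne, *],
      by simp [altDecomp, *], by simp [altDecomp, *], by simp [*]⟩

lemma exists_isAltDecomp_ab_cb (hab : a ≠ b) (hca : c ≠ a) (hcb : c ≠ b)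
    (h : IsRectPair Mk x ((a, b), (c, b))) : ∃ t', IsAltDecomp Mk x ((a, b), (c, b)) t' := by
  have := hab.symm; have := hca.symm; have := hcb.symm
  by_cases hcut : a ∈ cycIco c b
  · obtain ⟨h', hcut'⟩ := isRectPair_ca_ab_of_ab_cb hca hcut h
    exact ⟨_, h', by rw [endState_eq_swap x a b]; simp [Equiv.swap_apply_of_ne_of_ne, *],
      by simp [altDecomp, *], by simp [altDecomp, *], by simp [*]⟩
  · obtain ⟨h', hcut'⟩ := isRectPair_cb_ac_of_ab_cb hca hcut h
    exact ⟨_, h', by rw [endState_eq_swap x c b]; simp [Equiv.swap_apply_of_ne_of_ne, *],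
      by simp [altDecomp, *], by simp [altDecomp, *], by simp [*]⟩

lemma exists_isAltDecomp_ab_cd (hca : c ≠ a) (hcb : c ≠ b) (hda : d ≠ a) (hdb : d ≠ b)
    (h : IsRectPair Mk x ((a, b), (c, d))) : ∃ t', IsAltDecomp Mk x ((a, b), (c, d)) t' := by
  have := hca.symm; have := hcb.symm; have := hda.symm; have := hdb.symm
  exact ⟨_, isRectPair_cd_ab_of_ab_cd hca hcb hda hdb h,
    by rw [endState_eq_swap x a b]; simp [Equiv.swap_apply_of_ne_of_ne, *],
    by simp [altDecomp, *], by simp [altDecomp, *], by simp [*]⟩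

lemma exists_isAltDecomp (hrow : ∀ s : Fin n, ∃ t : Fin n, (s, t) ∈ Mk)
    (hcol : ∀ t : Fin n, ∃ s : Fin n, (s, t) ∈ Mk) {t : (Fin n × Fin n) × (Fin n × Fin n)}
    (h : IsRectPair Mk x t) : ∃ t', IsAltDecomp Mk x t t' := by
  obtain ⟨⟨a, b⟩, c, d⟩ := t
  have hab : a ≠ b := h.1.1
  have hcd : c ≠ d := h.2.1
  obtain rfl | hac := eq_or_ne a c
  · obtain rfl | hbd := eq_or_ne b d
    · exact (not_isRectPair_ab_ab hrow h).elim
    exact exists_isAltDecomp_ab_ad hab hcd hbd h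
  obtain rfl | hbc := eq_or_ne b c
  · obtain rfl | had := eq_or_ne a d
    · exact (not_isRectPair_ab_ba hcol h).elim
    exact exists_isAltDecomp_ab_bd hab had hcd h
  obtain rfl | had := eq_or_ne a d
  · exact exists_isAltDecomp_ab_ca hab hac.symm hbc.symm h
  obtain rfl | hbd := eq_or_ne b d
  · exact exists_isAltDecomp_ab_cb hab hac.symm hbc.symm h
  exact exists_isAltDecomp_ab_cd hac.symm hbc.symm had.symm hbd.symm h

end Involution

section Counting

open Finset

variable {n : ℕ} {Mk : Finset (Fin n × Fin n)}

open Classical in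
noncomputable def rectPairs (Mk : Finset (Fin n × Fin n)) (x z : Equiv.Perm (Fin n)) :
    Finset ((Fin n × Fin n) × (Fin n × Fin n)) :=
  {t | IsRectPair Mk x t ∧ endState x t = z}

lemma mem_rectPairs {x z : Equiv.Perm (Fin n)} {t : (Fin n × Fin n) × (Fin n × Fin n)} :
    t ∈ rectPairs Mk x z ↔ IsRectPair Mk x t ∧ endState x t = z := by
  simp [rectPairs]

open Classical in
lemma numRect_eq_card (x y : Equiv.Perm (Fin n)) :
    numRect Mk x y = #{r | IsRect Mk x r ∧ x * Equiv.swap r.1 r.2 = y} := by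
  rw [numRect, Nat.card_eq_fintype_card, Fintype.card_subtype]
  congr 1
  ext r
  simp only [mem_filter, mem_univ, true_and, IsRect, Equiv.ext_iff,
    Equiv.Perm.mul_apply, eq_comm (b := y _)]
  tauto

lemma sum_numRect_mul_numRect (x z : Equiv.Perm (Fin n)) :
    ∑ y, numRect Mk x y * numRect Mk y z = #(rectPairs Mk x z) := by
  classical
  rw [card_eq_sum_card_fiberwise (f := fun t => x * Equiv.swap t.1.1 t.1.2)
    (t := univ) (fun _ _ => mem_coe.2 (mem_univ _))]
  refine sum_congr rfl fun y _ => ?_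
  rw [numRect_eq_card, numRect_eq_card, ← card_product]
  congr 1
  ext ⟨r₁, r₂⟩
  simp only [mem_product, mem_filter, mem_univ, true_and, mem_rectPairs,
    IsRectPair, endState]
  constructor
  · rintro ⟨⟨h₁, rfl⟩, h₂, rfl⟩
    exact ⟨⟨⟨h₁, h₂⟩, rfl⟩, rfl⟩
  · rintro ⟨⟨⟨h₁, h₂⟩, rfl⟩, rfl⟩
    exact ⟨⟨h₁, rfl⟩, h₂, rfl⟩

lemma altDecomp_mem_rectPairs (hrow : ∀ s : Fin n, ∃ t : Fin n, (s, t) ∈ Mk)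
    (hcol : ∀ t : Fin n, ∃ s : Fin n, (s, t) ∈ Mk) {x z : Equiv.Perm (Fin n)}
    {t : (Fin n × Fin n) × (Fin n × Fin n)} (ht : t ∈ rectPairs Mk x z) :
    altDecomp x t ∈ rectPairs Mk x z ∧ altDecomp x (altDecomp x t) = t ∧ altDecomp x t ≠ t := by
  obtain ⟨h, rfl⟩ := mem_rectPairs.1 ht
  obtain ⟨t', h', hz, rfl, h₂, hne⟩ := exists_isAltDecomp hrow hcol h
  exact ⟨mem_rectPairs.2 ⟨h', hz⟩, h₂, hne⟩

end Counting

/-- If every row and every column of the `n×n` toroidal grid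
contains a marking, then the tilde differential
`∂̃ x = Σ_y #{empty rectangles from x to y with no markings} ⬝ y` (mod 2)
squares to zero: the matrix of `∂̃ ∘ ∂̃` vanishes. -/
theorem tilde_differential_squares_to_zero
    {n : ℕ} (Mk : Finset (Fin n × Fin n))
    (hrow : ∀ s : Fin n, ∃ t : Fin n, (s, t) ∈ Mk)
    (hcol : ∀ t : Fin n, ∃ s : Fin n, (s, t) ∈ Mk) :
    ∀ x z : Equiv.Perm (Fin n),
      ∑ y : Equiv.Perm (Fin n),
        (numRect Mk x y : ZMod 2) * (numRect Mk y z : ZMod 2) = 0 := by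
  intro x z
  have hcast : ∑ y, (numRect Mk x y : ZMod 2) * numRect Mk y z =
      ((∑ y, numRect Mk x y * numRect Mk y z : ℕ) : ZMod 2) := by
    push_cast; rfl
  rw [hcast, sum_numRect_mul_numRect, Finset.card_eq_sum_ones, Nat.cast_sum]
  exact Finset.sum_involution (fun t _ => altDecomp x t) (fun _ _ => by decide)
    (fun _ ht _ => (altDecomp_mem_rectPairs hrow hcol ht).2.2)
    (fun _ ht => (altDecomp_mem_rectPairs hrow hcol ht).1)
    (fun _ ht => (altDecomp_mem_rectPairs hrow hcol ht).2.1)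
end

section
/- For n ≥ 2, define the chain complex C_n over F = Z/2Z generated by the n! grid states of the n×n diagram g_n (which has exactly one O*-marking and 2n−2 X-markings filling the top row and rightmost column except that the lower-left (n−1)×(n−1) block has no markings), with differential counting empty rectangles disjoint from all markings. Then H(C_n) = 0. -/
namespace CnAux

open Equiv

lemma subval {n : ℕ} (a b : Fin n) :
    (a - b).val = if b.val ≤ a.val then a.val - b.val else a.val + n - b.val := by
  have ha := a.isLt; have hb := b.isLt
  rw [Fin.sub_def]
  show (n - b.val + a.val) % n = _
  split
  · next h =>
    have h1 : n - b.val + a.val = (a.val - b.val) + n := by omega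
    rw [h1, Nat.add_mod_right, Nat.mod_eq_of_lt (by omega)]
  · next h =>
    rw [Nat.mod_eq_of_lt (by omega)]
    omega

/-- Characterization of admissible rectangles. -/
def Rcond {n : ℕ} (x y : Equiv.Perm (Fin n)) (a b : Fin n) : Prop :=
  (∀ i, y i = x (Equiv.swap a b i)) ∧ a.val < b.val ∧ (x a).val < (x b).val ∧
  ∀ i : Fin n, ¬(a.val < i.val ∧ i.val < b.val ∧
    (x a).val < (x i).val ∧ (x i).val < (x b).val)

variable {n : ℕ}

lemma cond_iff {Mk : Finset (Fin n × Fin n)}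
    (hMk : ∀ s t : Fin n, (s, t) ∈ Mk ↔ (s.val = n - 1 ∨ t.val = n - 1))
    (x y : Equiv.Perm (Fin n)) (a b : Fin n) :
    (a ≠ b ∧ (∀ i, y i = x (Equiv.swap a b i)) ∧
      EmptyR x a b (x a) (x b) ∧ FreeR Mk a b (x a) (x b)) ↔ Rcond x y a b := by
  have ha := a.isLt; have hb := b.isLt
  have hxa := (x a).isLt; have hxb := (x b).isLt
  constructor
  · rintro ⟨hab, hy, hE, hF⟩
    have hvab : a.val ≠ b.val := fun h => hab (Fin.ext h)
    have hxab : (x a).val ≠ (x b).val := fun h => hab (x.injective (Fin.ext h))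
    have hrow : a.val < b.val := by
      by_contra h
      have hm : ((⟨n - 1, by omega⟩ : Fin n), x a) ∈ Mk := (hMk _ _).2 (Or.inl rfl)
      refine hF _ _ hm ⟨?_, ?_⟩
      · rw [subval, subval]
        simp only
        split <;> split <;> omega
      · rw [subval, subval]
        split <;> split <;> omega
    have hcol : (x a).val < (x b).val := by
      by_contra h
      have hm : (a, (⟨n - 1, by omega⟩ : Fin n)) ∈ Mk := (hMk _ _).2 (Or.inr rfl)
      refine hF _ _ hm ⟨?_, ?_⟩
      · rw [subval, subval]
        split <;> split <;> omega
      · rw [subval, subval]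
        simp only
        split <;> split <;> omega
    refine ⟨hy, hrow, hcol, ?_⟩
    intro i hi
    have hi1 := i.isLt; have hi2 := (x i).isLt
    refine hE i ⟨?_, ?_, ?_, ?_⟩ <;>
      · simp only [subval]
        split_ifs <;> omega
  · rintro ⟨hy, hrow, hcol, hE⟩
    refine ⟨fun h => by simp [h] at hrow, hy, ?_, ?_⟩
    · intro i hi
      have hi1 := i.isLt; have hi2 := (x i).isLt
      rw [subval, subval, subval, subval] at hi
      refine hE i ?_
      split_ifs at hi <;> omega
    · intro s t hst hc
      have hs1 := s.isLt; have ht1 := t.isLt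
      rw [subval, subval, subval, subval] at hc
      rcases (hMk s t).1 hst with h | h
      · split_ifs at hc <;> omega
      · split_ifs at hc <;> omega

lemma rcond_unique {x y : Equiv.Perm (Fin n)} {a b a' b' : Fin n}
    (h : Rcond x y a b) (h' : Rcond x y a' b') : a = a' ∧ b = b' := by
  have hs : Equiv.swap a b = Equiv.swap a' b' :=
    Equiv.ext fun i => x.injective ((h.1 i).symm.trans (h'.1 i))
  have hab : a.val < b.val := h.2.1
  have hab' : a'.val < b'.val := h'.2.1
  have hb' : b' = Equiv.swap a b a' := by rw [hs, Equiv.swap_apply_left]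
  rcases eq_or_ne a' a with rfl | h1
  · rw [Equiv.swap_apply_left] at hb'
    exact ⟨rfl, hb'.symm⟩
  rcases eq_or_ne a' b with rfl | h2
  · rw [Equiv.swap_apply_right] at hb'
    omega
  · rw [Equiv.swap_apply_of_ne_of_ne h1 h2] at hb'
    omega

lemma numRect_eq_one {Mk : Finset (Fin n × Fin n)}
    (hMk : ∀ s t : Fin n, (s, t) ∈ Mk ↔ (s.val = n - 1 ∨ t.val = n - 1))
    {x y : Equiv.Perm (Fin n)} {a b : Fin n} (hr : Rcond x y a b) :
    numRect Mk x y = 1 := by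
  rw [numRect]
  haveI : Nonempty {ab : Fin n × Fin n // ab.1 ≠ ab.2 ∧
      (∀ i, y i = x (Equiv.swap ab.1 ab.2 i)) ∧
      EmptyR x ab.1 ab.2 (x ab.1) (x ab.2) ∧
      FreeR Mk ab.1 ab.2 (x ab.1) (x ab.2)} :=
    ⟨⟨(a, b), (cond_iff hMk x y a b).2 hr⟩⟩
  haveI : Subsingleton {ab : Fin n × Fin n // ab.1 ≠ ab.2 ∧
      (∀ i, y i = x (Equiv.swap ab.1 ab.2 i)) ∧
      EmptyR x ab.1 ab.2 (x ab.1) (x ab.2) ∧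
      FreeR Mk ab.1 ab.2 (x ab.1) (x ab.2)} := by
    constructor
    rintro ⟨⟨c, d⟩, hc⟩ ⟨⟨c', d'⟩, hc'⟩
    have u1 := rcond_unique ((cond_iff hMk x y c d).1 hc) hr
    have u2 := rcond_unique ((cond_iff hMk x y c' d').1 hc') hr
    apply Subtype.ext
    simp only [Prod.mk.injEq]
    exact ⟨u1.1.trans u2.1.symm, u1.2.trans u2.2.symm⟩
  exact Nat.card_unique

lemma numRect_eq_zero {Mk : Finset (Fin n × Fin n)}
    (hMk : ∀ s t : Fin n, (s, t) ∈ Mk ↔ (s.val = n - 1 ∨ t.val = n - 1))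
    {x y : Equiv.Perm (Fin n)} (h : ∀ a b : Fin n, ¬ Rcond x y a b) :
    numRect Mk x y = 0 := by
  rw [numRect]
  haveI : IsEmpty {ab : Fin n × Fin n // ab.1 ≠ ab.2 ∧
      (∀ i, y i = x (Equiv.swap ab.1 ab.2 i)) ∧
      EmptyR x ab.1 ab.2 (x ab.1) (x ab.2) ∧
      FreeR Mk ab.1 ab.2 (x ab.1) (x ab.2)} :=
    ⟨fun ⟨⟨c, d⟩, hc⟩ => h c d ((cond_iff hMk x y c d).1 hc)⟩
  exact Nat.card_of_isEmpty

lemma sconj (a0 a1 c d : Fin n) :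
    Equiv.swap (Equiv.swap a0 a1 c) (Equiv.swap a0 a1 d) =
      Equiv.swap a0 a1 * Equiv.swap c d * Equiv.swap a0 a1 := by
  rw [Equiv.swap_apply_apply, Equiv.swap_inv]

/-- If `c ∉ {a0, a1}`, conjugating `swap a0 c` by `s = swap a0 a1` gives `swap a1 c`:
`s * swap a1 c = swap a0 c * s`. -/
lemma skey {a0 a1 c : Fin n} (hc0 : c ≠ a0) (hc1 : c ≠ a1) :
    Equiv.swap a0 a1 * Equiv.swap a1 c = Equiv.swap a0 c * Equiv.swap a0 a1 := by
  have h := sconj a0 a1 a0 c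
  rw [Equiv.swap_apply_left, Equiv.swap_apply_of_ne_of_ne hc0 hc1] at h
  rw [h, ← mul_assoc, ← mul_assoc, Equiv.swap_mul_self, one_mul]

/-- If `c, d ∉ {a0, a1}`, then `swap c d` commutes with `swap a0 a1`. -/
lemma scomm {a0 a1 c d : Fin n} (hc0 : c ≠ a0) (hc1 : c ≠ a1)
    (hd0 : d ≠ a0) (hd1 : d ≠ a1) :
    Equiv.swap a0 a1 * Equiv.swap c d = Equiv.swap c d * Equiv.swap a0 a1 := by
  have h := sconj a0 a1 c d
  rw [Equiv.swap_apply_of_ne_of_ne hc0 hc1, Equiv.swap_apply_of_ne_of_ne hd0 hd1] at h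
  calc Equiv.swap a0 a1 * Equiv.swap c d
      = (Equiv.swap a0 a1 * Equiv.swap c d * Equiv.swap a0 a1) * Equiv.swap a0 a1 := by
        rw [mul_assoc, Equiv.swap_mul_self, mul_one]
    _ = Equiv.swap c d * Equiv.swap a0 a1 := by rw [← h]

section Bridge

variable {a0 a1 : Fin n}

/-- Pointwise values of `x * swap a0 a1`. -/
lemma mulswap_apply_of_ne (x : Equiv.Perm (Fin n)) {i : Fin n}
    (h0 : i ≠ a0) (h1 : i ≠ a1) : (x * Equiv.swap a0 a1) i = x i := by
  rw [Equiv.Perm.mul_apply, Equiv.swap_apply_of_ne_of_ne h0 h1]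

lemma mulswap_apply_left (x : Equiv.Perm (Fin n)) :
    (x * Equiv.swap a0 a1) a0 = x a1 := by
  rw [Equiv.Perm.mul_apply, Equiv.swap_apply_left]

lemma mulswap_apply_right (x : Equiv.Perm (Fin n)) :
    (x * Equiv.swap a0 a1) a1 = x a0 := by
  rw [Equiv.Perm.mul_apply, Equiv.swap_apply_right]

lemma bridgeF (h0 : a0.val = 0) (h1 : a1.val = 1) {x y : Equiv.Perm (Fin n)}
    (hup : (x a0).val < (x a1).val) (hne : y ≠ x * Equiv.swap a0 a1)
    {a b : Fin n} (hr : Rcond x y a b) :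
    (y a0).val < (y a1).val ∧
      ∃ a' b', Rcond (x * Equiv.swap a0 a1) (y * Equiv.swap a0 a1) a' b' := by
  obtain ⟨hyc, hab, hvals, hemp⟩ := hr
  have hyeq : y = x * Equiv.swap a b := Equiv.ext fun i => hyc i
  have hbn := b.isLt
  have h01 : a0 ≠ a1 := fun h => by rw [h, h1] at h0; omega
  set s : Equiv.Perm (Fin n) := Equiv.swap a0 a1 with hsdef
  have hx0 : (x * s) a0 = x a1 := mulswap_apply_left x
  have hx1 : (x * s) a1 = x a0 := mulswap_apply_right x
  have hxi : ∀ i : Fin n, 2 ≤ i.val → (x * s) i = x i := fun i h2 =>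
    mulswap_apply_of_ne x (fun h => by rw [h, h0] at h2; omega)
      (fun h => by rw [h, h1] at h2; omega)
  rcases Nat.lt_or_ge a.val 2 with hlt | hge
  · rcases Nat.lt_or_ge a.val 1 with hlt0 | hge1
    · -- a = a0
      have ha : a = a0 := Fin.ext (by omega)
      rw [ha] at hab hvals hemp hyeq
      have hb2 : 2 ≤ b.val := by
        rcases Nat.lt_or_ge b.val 2 with hb1 | h
        · exfalso
          have hba : b = a1 := Fin.ext (by omega)
          rw [hba] at hyeq
          exact hne hyeq
        · exact h
      have hba0 : b ≠ a0 := fun h => by rw [h, h0] at hb2; omega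
      have hba1 : b ≠ a1 := fun h => by rw [h, h1] at hb2; omega
      have hya0 : y a0 = x b := by
        rw [hyeq, Equiv.Perm.mul_apply, Equiv.swap_apply_left]
      have hya1 : y a1 = x a1 := by
        rw [hyeq, Equiv.Perm.mul_apply,
          Equiv.swap_apply_of_ne_of_ne h01.symm hba1.symm]
      have hxb1 : (x b).val < (x a1).val := by
        have hne' : (x b).val ≠ (x a1).val :=
          fun h => hba1 (x.injective (Fin.ext h))
        have h2 : ¬ ((x a1).val < (x b).val) :=
          fun hlast => hemp a1 ⟨by omega, by omega, hup, hlast⟩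
        omega
      have hperm : y * s = (x * s) * Equiv.swap a1 b := by
        rw [hyeq, mul_assoc, mul_assoc, skey hba0 hba1]
      refine ⟨by rw [hya0, hya1]; exact hxb1, a1, b,
        fun i => by rw [hperm]; rfl, by omega, ?_, ?_⟩
      · rw [hx1, hxi b hb2]; exact hvals
      · rintro i ⟨hi1, hi2, hi3, hi4⟩
        rw [hx1] at hi3
        rw [hxi b hb2] at hi4
        have hig : 2 ≤ i.val := by omega
        rw [hxi i hig] at hi3 hi4
        exact hemp i ⟨by omega, hi2, hi3, hi4⟩
    · -- a = a1
      have ha : a = a1 := Fin.ext (by omega)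
      rw [ha] at hab hvals hemp hyeq
      have hb2 : 2 ≤ b.val := by omega
      have hba0 : b ≠ a0 := fun h => by rw [h, h0] at hb2; omega
      have hba1 : b ≠ a1 := fun h => by rw [h, h1] at hb2; omega
      have hya0 : y a0 = x a0 := by
        rw [hyeq, Equiv.Perm.mul_apply,
          Equiv.swap_apply_of_ne_of_ne h01 hba0.symm]
      have hya1 : y a1 = x b := by
        rw [hyeq, Equiv.Perm.mul_apply, Equiv.swap_apply_left]
      have hk : s * Equiv.swap a0 b = Equiv.swap a1 b * s := by
        have h2 : Equiv.swap a0 b = s * Equiv.swap a1 b * s := by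
          have h3 := sconj a0 a1 a1 b
          rwa [Equiv.swap_apply_right, Equiv.swap_apply_of_ne_of_ne hba0 hba1] at h3
        rw [h2, ← mul_assoc, ← mul_assoc, Equiv.swap_mul_self, one_mul]
      have hperm : y * s = (x * s) * Equiv.swap a0 b := by
        rw [hyeq, mul_assoc, mul_assoc, hk]
      refine ⟨by rw [hya0, hya1]; omega, a0, b,
        fun i => by rw [hperm]; rfl, by omega, ?_, ?_⟩
      · rw [hx0, hxi b hb2]; exact hvals
      · rintro i ⟨hi1, hi2, hi3, hi4⟩
        rw [hx0] at hi3
        rw [hxi b hb2] at hi4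
        rcases Nat.lt_or_ge i.val 2 with h | h
        · have hia : i = a1 := Fin.ext (by omega)
          rw [hia, hx1] at hi3
          omega
        · rw [hxi i h] at hi3 hi4
          exact hemp i ⟨by omega, hi2, hi3, hi4⟩
  · -- 2 ≤ a.val
    have hb2 : 2 ≤ b.val := by omega
    have ha0 : a ≠ a0 := fun h => by rw [h, h0] at hge; omega
    have ha1 : a ≠ a1 := fun h => by rw [h, h1] at hge; omega
    have hba0 : b ≠ a0 := fun h => by rw [h, h0] at hb2; omega
    have hba1 : b ≠ a1 := fun h => by rw [h, h1] at hb2; omega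
    have hya0 : y a0 = x a0 := by
      rw [hyeq, Equiv.Perm.mul_apply,
        Equiv.swap_apply_of_ne_of_ne ha0.symm hba0.symm]
    have hya1 : y a1 = x a1 := by
      rw [hyeq, Equiv.Perm.mul_apply,
        Equiv.swap_apply_of_ne_of_ne ha1.symm hba1.symm]
    have hperm : y * s = (x * s) * Equiv.swap a b := by
      rw [hyeq, mul_assoc, mul_assoc, scomm ha0 ha1 hba0 hba1]
    refine ⟨by rw [hya0, hya1]; exact hup, a, b,
      fun i => by rw [hperm]; rfl, hab, ?_, ?_⟩
    · rw [hxi a hge, hxi b hb2]; exact hvals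
    · rintro i ⟨hi1, hi2, hi3, hi4⟩
      rw [hxi a hge] at hi3
      rw [hxi b hb2] at hi4
      have hig : 2 ≤ i.val := by omega
      rw [hxi i hig] at hi3 hi4
      exact hemp i ⟨hi1, hi2, hi3, hi4⟩

lemma bridgeB (h0 : a0.val = 0) (h1 : a1.val = 1) {z y : Equiv.Perm (Fin n)}
    (hup : (y a0).val < (y a1).val) (hne : y ≠ z)
    {a b : Fin n} (hr : Rcond z (y * Equiv.swap a0 a1) a b) :
    (z a1).val < (z a0).val ∧
      ∃ a' b', Rcond (z * Equiv.swap a0 a1) y a' b' := by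
  obtain ⟨hyc, hab, hvals, hemp⟩ := hr
  have hbn := b.isLt
  have h01 : a0 ≠ a1 := fun h => by rw [h, h1] at h0; omega
  set s : Equiv.Perm (Fin n) := Equiv.swap a0 a1 with hsdef
  have hw : y * s = z * Equiv.swap a b := Equiv.ext fun i => hyc i
  have hz0 : (z * s) a0 = z a1 := mulswap_apply_left z
  have hz1 : (z * s) a1 = z a0 := mulswap_apply_right z
  have hzi : ∀ i : Fin n, 2 ≤ i.val → (z * s) i = z i := fun i h2 =>
    mulswap_apply_of_ne z (fun h => by rw [h, h0] at h2; omega)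
      (fun h => by rw [h, h1] at h2; omega)
  have hy' : y = z * Equiv.swap a b * s := by
    rw [← hw, mul_assoc, Equiv.swap_mul_self, mul_one]
  rcases Nat.lt_or_ge a.val 2 with hlt | hge
  · rcases Nat.lt_or_ge a.val 1 with hlt0 | hge1
    · -- a = a0
      have ha : a = a0 := Fin.ext (by omega)
      rw [ha] at hab hvals hemp hy'
      have hb2 : 2 ≤ b.val := by
        rcases Nat.lt_or_ge b.val 2 with hb1 | h
        · exfalso
          have hba : b = a1 := Fin.ext (by omega)
          rw [ha, hba] at hw
          exact hne (mul_right_cancel (hw.trans (by rw [hsdef])))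
        · exact h
      have hba0 : b ≠ a0 := fun h => by rw [h, h0] at hb2; omega
      have hba1 : b ≠ a1 := fun h => by rw [h, h1] at hb2; omega
      have hya0 : y a0 = z a1 := by
        rw [hy']
        show z (Equiv.swap a0 b (s a0)) = z a1
        rw [Equiv.swap_apply_left, Equiv.swap_apply_of_ne_of_ne h01.symm hba1.symm]
      have hya1 : y a1 = z b := by
        rw [hy']
        show z (Equiv.swap a0 b (s a1)) = z b
        rw [Equiv.swap_apply_right, Equiv.swap_apply_left]
      have hup' : (z a1).val < (z b).val := by rw [← hya0, ← hya1]; exact hup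
      have hdown : (z a1).val < (z a0).val := by
        have hne' : (z a0).val ≠ (z a1).val :=
          fun h => h01 (z.injective (Fin.ext h))
        have h2 : ¬ ((z a0).val < (z a1).val) :=
          fun hc => hemp a1 ⟨by omega, by omega, hc, hup'⟩
        omega
      have hyf : y = (z * s) * Equiv.swap a1 b := by
        rw [hy', mul_assoc, mul_assoc, skey hba0 hba1]
      refine ⟨hdown, a1, b, fun i => by rw [hyf]; rfl, by omega, ?_, ?_⟩
      · rw [hz1, hzi b hb2]; exact hvals
      · rintro i ⟨hi1, hi2, hi3, hi4⟩
        rw [hz1] at hi3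
        rw [hzi b hb2] at hi4
        have hig : 2 ≤ i.val := by omega
        rw [hzi i hig] at hi3 hi4
        exact hemp i ⟨by omega, hi2, hi3, hi4⟩
    · -- a = a1
      have ha : a = a1 := Fin.ext (by omega)
      rw [ha] at hab hvals hemp hy'
      have hb2 : 2 ≤ b.val := by omega
      have hba0 : b ≠ a0 := fun h => by rw [h, h0] at hb2; omega
      have hba1 : b ≠ a1 := fun h => by rw [h, h1] at hb2; omega
      have hya0 : y a0 = z b := by
        rw [hy']
        show z (Equiv.swap a1 b (s a0)) = z b
        rw [Equiv.swap_apply_left, Equiv.swap_apply_left]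
      have hya1 : y a1 = z a0 := by
        rw [hy']
        show z (Equiv.swap a1 b (s a1)) = z a0
        rw [Equiv.swap_apply_right, Equiv.swap_apply_of_ne_of_ne h01 hba0.symm]
      have hup' : (z b).val < (z a0).val := by rw [← hya0, ← hya1]; exact hup
      have hk : s * Equiv.swap a0 b = Equiv.swap a1 b * s := by
        have h2 : Equiv.swap a0 b = s * Equiv.swap a1 b * s := by
          have h3 := sconj a0 a1 a1 b
          rwa [Equiv.swap_apply_right, Equiv.swap_apply_of_ne_of_ne hba0 hba1] at h3
        rw [h2, ← mul_assoc, ← mul_assoc, Equiv.swap_mul_self, one_mul]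
      have hyf : y = (z * s) * Equiv.swap a0 b := by
        rw [hy', mul_assoc, mul_assoc, ← hk]
      refine ⟨by omega, a0, b, fun i => by rw [hyf]; rfl, by omega, ?_, ?_⟩
      · rw [hz0, hzi b hb2]; exact hvals
      · rintro i ⟨hi1, hi2, hi3, hi4⟩
        rw [hz0] at hi3
        rw [hzi b hb2] at hi4
        rcases Nat.lt_or_ge i.val 2 with h | h
        · have hia : i = a1 := Fin.ext (by omega)
          rw [hia, hz1] at hi4
          omega
        · rw [hzi i h] at hi3 hi4
          exact hemp i ⟨by omega, hi2, hi3, hi4⟩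
  · -- 2 ≤ a.val
    have hb2 : 2 ≤ b.val := by omega
    have ha0 : a ≠ a0 := fun h => by rw [h, h0] at hge; omega
    have ha1 : a ≠ a1 := fun h => by rw [h, h1] at hge; omega
    have hba0 : b ≠ a0 := fun h => by rw [h, h0] at hb2; omega
    have hba1 : b ≠ a1 := fun h => by rw [h, h1] at hb2; omega
    have hya0 : y a0 = z a1 := by
      rw [hy']
      show z (Equiv.swap a b (s a0)) = z a1
      rw [show s a0 = a1 from Equiv.swap_apply_left a0 a1,
        Equiv.swap_apply_of_ne_of_ne ha1.symm hba1.symm]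
    have hya1 : y a1 = z a0 := by
      rw [hy']
      show z (Equiv.swap a b (s a1)) = z a0
      rw [show s a1 = a0 from Equiv.swap_apply_right a0 a1,
        Equiv.swap_apply_of_ne_of_ne ha0.symm hba0.symm]
    have hyf : y = (z * s) * Equiv.swap a b := by
      rw [hy', mul_assoc, mul_assoc, scomm ha0 ha1 hba0 hba1]
    refine ⟨by rw [← hya0, ← hya1]; exact hup, a, b,
      fun i => by rw [hyf]; rfl, hab, ?_, ?_⟩
    · rw [hzi a hge, hzi b hb2]; exact hvals
    · rintro i ⟨hi1, hi2, hi3, hi4⟩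
      rw [hzi a hge] at hi3
      rw [hzi b hb2] at hi4
      have hig : 2 ≤ i.val := by omega
      rw [hzi i hig] at hi3 hi4
      exact hemp i ⟨hi1, hi2, hi3, hi4⟩

lemma key {Mk : Finset (Fin n × Fin n)}
    (hMk : ∀ s t : Fin n, (s, t) ∈ Mk ↔ (s.val = n - 1 ∨ t.val = n - 1))
    (h0 : a0.val = 0) (h1 : a1.val = 1) (y z : Equiv.Perm (Fin n)) :
    (if (z a1).val < (z a0).val then (numRect Mk (z * Equiv.swap a0 a1) y : ZMod 2) else 0)
      + (if (y a0).val < (y a1).val then (numRect Mk z (y * Equiv.swap a0 a1) : ZMod 2) else 0)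
      = if y = z then 1 else 0 := by
  classical
  have h01 : a0 ≠ a1 := fun h => by rw [h, h1] at h0; omega
  have hzz : z * Equiv.swap a0 a1 * Equiv.swap a0 a1 = z := by
    rw [mul_assoc, Equiv.swap_mul_self, mul_one]
  by_cases hyz : y = z
  · subst hyz
    have hy01 : (y a0).val ≠ (y a1).val := fun h => h01 (y.injective (Fin.ext h))
    rcases Nat.lt_or_ge (y a1).val (y a0).val with hd | hu
    · rw [if_pos hd, if_neg (by omega), if_pos rfl, add_zero]
      have hone : numRect Mk (y * Equiv.swap a0 a1) y = 1 := by
        refine numRect_eq_one hMk (a := a0) (b := a1) ⟨?_, by omega, ?_, ?_⟩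
        · intro i
          show y i = y (Equiv.swap a0 a1 (Equiv.swap a0 a1 i))
          rw [Equiv.swap_apply_self]
        · rw [mulswap_apply_left, mulswap_apply_right]; exact hd
        · intro i hi; omega
      rw [hone]; norm_num
    · rw [if_neg (by omega), if_pos (by omega), if_pos rfl, zero_add]
      have hone : numRect Mk y (y * Equiv.swap a0 a1) = 1 := by
        refine numRect_eq_one hMk (a := a0) (b := a1) ⟨?_, by omega, by omega, ?_⟩
        · intro i; rfl
        · intro i hi; omega
      rw [hone]; norm_num
  · rw [if_neg hyz]
    by_cases hT1g : (z a1).val < (z a0).val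
    · have hup' : ((z * Equiv.swap a0 a1) a0).val < ((z * Equiv.swap a0 a1) a1).val := by
        rw [mulswap_apply_left, mulswap_apply_right]; exact hT1g
      have hne' : y ≠ (z * Equiv.swap a0 a1) * Equiv.swap a0 a1 := by rw [hzz]; exact hyz
      by_cases hT2g : (y a0).val < (y a1).val
      · rw [if_pos hT1g, if_pos hT2g]
        have hiff : (∃ a b, Rcond (z * Equiv.swap a0 a1) y a b) ↔
            (∃ a b, Rcond z (y * Equiv.swap a0 a1) a b) := by
          constructor
          · rintro ⟨a, b, hr⟩
            obtain ⟨-, a', b', hr'⟩ := bridgeF h0 h1 hup' hne' hr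
            rw [hzz] at hr'
            exact ⟨a', b', hr'⟩
          · rintro ⟨a, b, hr⟩
            exact (bridgeB h0 h1 hT2g hyz hr).2
        by_cases he : ∃ a b, Rcond (z * Equiv.swap a0 a1) y a b
        · obtain ⟨a, b, hr⟩ := he
          obtain ⟨a', b', hr'⟩ := hiff.1 ⟨a, b, hr⟩
          rw [numRect_eq_one hMk hr, numRect_eq_one hMk hr']
          decide
        · have he2 : ∀ a b, ¬ Rcond z (y * Equiv.swap a0 a1) a b :=
            fun a b hr => he (hiff.2 ⟨a, b, hr⟩)
          rw [numRect_eq_zero hMk (fun a b hr => he ⟨a, b, hr⟩),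
            numRect_eq_zero hMk he2]
          decide
      · rw [if_pos hT1g, if_neg hT2g, add_zero]
        rw [numRect_eq_zero hMk (fun a b hr => hT2g (bridgeF h0 h1 hup' hne' hr).1)]
        norm_num
    · by_cases hT2g : (y a0).val < (y a1).val
      · rw [if_neg hT1g, if_pos hT2g, zero_add]
        rw [numRect_eq_zero hMk (fun a b hr => hT1g (bridgeB h0 h1 hT2g hyz hr).1)]
        norm_num
      · rw [if_neg hT1g, if_neg hT2g, add_zero]

end Bridge

theorem Cn_acyclic'
    {n : ℕ} (hn : 2 ≤ n) (Mk : Finset (Fin n × Fin n))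
    (hMk : ∀ s t : Fin n, (s, t) ∈ Mk ↔ (s.val = n - 1 ∨ t.val = n - 1)) :
    ∀ f : Equiv.Perm (Fin n) → ZMod 2,
      (∀ y : Equiv.Perm (Fin n),
        ∑ x : Equiv.Perm (Fin n), (numRect Mk x y : ZMod 2) * f x = 0) →
      ∃ g : Equiv.Perm (Fin n) → ZMod 2,
        ∀ y : Equiv.Perm (Fin n),
          ∑ x : Equiv.Perm (Fin n), (numRect Mk x y : ZMod 2) * g x = f y := by
  classical
  intro f hf
  set a0 : Fin n := ⟨0, by omega⟩ with ha0def
  set a1 : Fin n := ⟨1, by omega⟩ with ha1def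
  have h0 : a0.val = 0 := rfl
  have h1 : a1.val = 1 := rfl
  set s : Equiv.Perm (Fin n) := Equiv.swap a0 a1 with hsdef
  refine ⟨fun w => if (w a0).val < (w a1).val then f (w * s) else 0, ?_⟩
  intro y
  have hre : ∑ x : Equiv.Perm (Fin n), (numRect Mk x y : ZMod 2) *
        (if (x a0).val < (x a1).val then f (x * s) else 0)
      = ∑ x : Equiv.Perm (Fin n), (numRect Mk (x * s) y : ZMod 2) *
        (if (x a1).val < (x a0).val then f x else 0) := by
    refine (Fintype.sum_equiv (Equiv.mulRight s) _ _ ?_).symm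
    intro x
    have e1 : (Equiv.mulRight s) x = x * s := rfl
    rw [e1, mulswap_apply_left, mulswap_apply_right, mul_assoc,
      Equiv.swap_mul_self, mul_one]
  rw [hre]
  have hsum2 : ∑ x : Equiv.Perm (Fin n),
      (if (y a0).val < (y a1).val then (numRect Mk x (y * s) : ZMod 2) else 0) * f x = 0 := by
    by_cases hyg : (y a0).val < (y a1).val
    · simp only [if_pos hyg]
      exact hf (y * s)
    · simp only [if_neg hyg, zero_mul, Finset.sum_const_zero]
  have hstep : ∑ x : Equiv.Perm (Fin n), (numRect Mk (x * s) y : ZMod 2) *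
        (if (x a1).val < (x a0).val then f x else 0)
      = ∑ x : Equiv.Perm (Fin n), (if y = x then (1 : ZMod 2) else 0) * f x := by
    calc ∑ x : Equiv.Perm (Fin n), (numRect Mk (x * s) y : ZMod 2) *
          (if (x a1).val < (x a0).val then f x else 0)
        = (∑ x : Equiv.Perm (Fin n), (numRect Mk (x * s) y : ZMod 2) *
            (if (x a1).val < (x a0).val then f x else 0))
          + ∑ x : Equiv.Perm (Fin n),
            (if (y a0).val < (y a1).val then (numRect Mk x (y * s) : ZMod 2) else 0) * f x := by
          rw [hsum2, add_zero]
      _ = ∑ x : Equiv.Perm (Fin n), ((numRect Mk (x * s) y : ZMod 2) *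
            (if (x a1).val < (x a0).val then f x else 0)
          + (if (y a0).val < (y a1).val then (numRect Mk x (y * s) : ZMod 2) else 0) * f x) :=
          Finset.sum_add_distrib.symm
      _ = ∑ x : Equiv.Perm (Fin n), (if y = x then (1 : ZMod 2) else 0) * f x := by
          refine Finset.sum_congr rfl fun x _ => ?_
          have hk := key (a0 := a0) (a1 := a1) hMk h0 h1 y x
          calc (numRect Mk (x * s) y : ZMod 2) * (if (x a1).val < (x a0).val then f x else 0)
                + (if (y a0).val < (y a1).val then (numRect Mk x (y * s) : ZMod 2) else 0) * f x
              = ((if (x a1).val < (x a0).val then (numRect Mk (x * s) y : ZMod 2) else 0)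
                + (if (y a0).val < (y a1).val then (numRect Mk x (y * s) : ZMod 2) else 0)) * f x := by
                split_ifs <;> ring
            _ = (if y = x then (1 : ZMod 2) else 0) * f x := by rw [hk]
  rw [hstep]
  simp only [ite_mul, one_mul, zero_mul]
  rw [Finset.sum_ite_eq]
  simp

end CnAux

/-- For `n ≥ 2`, the chain complex `C_n` generated over `F = ℤ/2`
by the `n!` grid states of the `n×n` diagram `g_n` — whose markings (one `O*` and
`2n-2` `X`'s) exactly fill the top row and the rightmost column, leaving the
lower-left `(n-1)×(n-1)` block without markings — with differential counting
empty rectangles disjoint from all markings, has vanishing homology: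
every cycle is a boundary. -/
theorem Cn_acyclic
    {n : ℕ} (hn : 2 ≤ n) (Mk : Finset (Fin n × Fin n))
    (hMk : ∀ s t : Fin n, (s, t) ∈ Mk ↔ (s.val = n - 1 ∨ t.val = n - 1)) :
    ∀ f : Equiv.Perm (Fin n) → ZMod 2,
      (∀ y : Equiv.Perm (Fin n),
        ∑ x : Equiv.Perm (Fin n), (numRect Mk x y : ZMod 2) * f x = 0) →
      ∃ g : Equiv.Perm (Fin n) → ZMod 2,
        ∀ y : Equiv.Perm (Fin n),
          ∑ x : Equiv.Perm (Fin n), (numRect Mk x y : ZMod 2) * g x = f y := by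
  exact CnAux.Cn_acyclic' hn Mk hMk
end
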